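/- arXiv:1809.04307 — 4 statements merged into one kernel-verified Lean document; each statement's English description precedes it below -/
import Mathlib

section
/- Let F : ℝ^N → ℝ^N be bounded and continuous, and suppose that for every x* ∈ ℝ^N there exist an open neighborhood V of x* and a constant M > 0 such that (F(x) − F(y)) · (x − y) ≤ M·|x − y|² for all x, y ∈ V. Then for every initial configuration x₀ ∈ ℝ^N there exists a global-in-time solution x : [0, ∞) → ℝ^N of the initial value problem ẋ(t) = F(x(t)), x(0) = x₀ (a differentiable curve satisfying the equation at every t ≥ 0), and this solution is unique forwards in time: any two such solutions on [0, ∞) with the same initial value coincide. -/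
open Set Filter Topology RealInnerProductSpace
set_option linter.unusedSectionVars false
set_option linter.unusedTactic false
set_option linter.unnecessarySimpa false
set_option linter.unnecessarySeqFocus false
set_option maxHeartbeats 1000000
namespace Stmt0

variable {E : Type*} [NormedAddCommGroup E] [InnerProductSpace ℝ E]

lemma sq_norm_hasDeriv {x y : ℝ → E} {vx vy : E} {s : Set ℝ} {t : ℝ}
    (hx : HasDerivWithinAt x vx s t) (hy : HasDerivWithinAt y vy s t) :
    HasDerivWithinAt (fun u => ‖x u - y u‖ ^ 2) (2 * ⟪vx - vy, x t - y t⟫) s t := by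
  have h := HasDerivWithinAt.inner ℝ (hx.sub hy) (hx.sub hy)
  have heq : (fun u => ⟪x u - y u, x u - y u⟫) = fun u => ‖x u - y u‖ ^ 2 := by
    funext u; rw [real_inner_self_eq_norm_sq]
  simp only [Pi.sub_apply] at h
  rw [heq] at h
  refine h.congr_deriv ?_
  rw [real_inner_comm (x t - y t) (vx - vy)]
  ring

lemma gron {x y vx vy : ℝ → E} {a b K eps delta : ℝ}
    (hx : ContinuousOn x (Icc a b)) (hy : ContinuousOn y (Icc a b))
    (hdx : ∀ t ∈ Ico a b, HasDerivWithinAt x (vx t) (Ici t) t)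
    (hdy : ∀ t ∈ Ico a b, HasDerivWithinAt y (vy t) (Ici t) t)
    (hbound : ∀ t ∈ Ico a b, 2 * ⟪vx t - vy t, x t - y t⟫ ≤ K * ‖x t - y t‖ ^ 2 + eps)
    (ha : ‖x a - y a‖ ^ 2 ≤ delta) :
    ∀ t ∈ Icc a b, ‖x t - y t‖ ^ 2 ≤ gronwallBound delta K eps (t - a) := by
  apply le_gronwallBound_of_liminf_deriv_right_le (f' := fun t => 2 * ⟪vx t - vy t, x t - y t⟫)
    (((hx.sub hy).norm).pow 2)
  · intro t ht r hr
    have hd := sq_norm_hasDeriv (hdx t ht) (hdy t ht)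
    have hslope := hasDerivWithinAt_iff_tendsto_slope.mp hd
    rw [Ici_sdiff_left] at hslope
    refine ((hslope.eventually_lt_const hr).mono ?_).frequently
    intro z hz
    rwa [slope_def_field, div_eq_inv_mul] at hz
  · exact ha
  · exact hbound

/-- Forward uniqueness. -/
lemma uniq {F : E → E}
    (hosl : ∀ xs : E, ∃ V : Set E, IsOpen V ∧ xs ∈ V ∧ ∃ M : ℝ, 0 < M ∧
      ∀ x ∈ V, ∀ y ∈ V, ⟪F x - F y, x - y⟫ ≤ M * ‖x - y‖ ^ 2)
    (x y : ℝ → E) (hxy0 : x 0 = y 0)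
    (hdx : ∀ t ∈ Ici (0:ℝ), HasDerivWithinAt x (F (x t)) (Ici (0:ℝ)) t)
    (hdy : ∀ t ∈ Ici (0:ℝ), HasDerivWithinAt y (F (y t)) (Ici (0:ℝ)) t) :
    ∀ t ∈ Ici (0:ℝ), x t = y t := by
  have hcx : ContinuousOn x (Ici (0:ℝ)) := fun t ht => (hdx t ht).continuousWithinAt
  have hcy : ContinuousOn y (Ici (0:ℝ)) := fun t ht => (hdy t ht).continuousWithinAt
  intro T hT
  set s : Set ℝ := {t | x t = y t} with hsdef
  suffices h : Icc (0:ℝ) T ⊆ s from h ⟨hT, le_refl T⟩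
  apply IsClosed.Icc_subset_of_forall_exists_gt
  · have hseq : s ∩ Icc 0 T = Icc 0 T ∩ (fun t => x t - y t) ⁻¹' {0} := by
      ext t
      simp only [hsdef, mem_inter_iff, mem_setOf_eq, mem_preimage, mem_singleton_iff,
        sub_eq_zero, and_comm]
    rw [hseq]
    exact ContinuousOn.preimage_isClosed_of_isClosed
      ((hcx.mono Icc_subset_Ici_self).sub (hcy.mono Icc_subset_Ici_self))
      isClosed_Icc isClosed_singleton
  · exact hxy0
  · rintro u ⟨hus, hu0, huT⟩ w hw
    have hxyu : x u = y u := hus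
    obtain ⟨V, hVopen, hVmem, M, hMpos, hM⟩ := hosl (x u)
    have hxV : ∀ᶠ v in 𝓝[Ici (0:ℝ)] u, x v ∈ V :=
      (hcx u hu0).eventually_mem (hVopen.mem_nhds hVmem)
    have hyV : ∀ᶠ v in 𝓝[Ici (0:ℝ)] u, y v ∈ V :=
      (hcy u hu0).eventually_mem (hVopen.mem_nhds (by rwa [hxyu] at hVmem))
    obtain ⟨δ, hδpos, hball⟩ := Metric.mem_nhdsWithin_iff.1 (hxV.and hyV)
    set d : ℝ := min (δ/2) (w - u) with hddef
    have hdpos : 0 < d := lt_min (by linarith) (by simpa using hw)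
    have hkey : ∀ v ∈ Icc u (u + d), x v ∈ V ∧ y v ∈ V := by
      intro v hv
      apply hball
      constructor
      · rw [Metric.mem_ball, Real.dist_eq, abs_of_nonneg (by linarith [hv.1])]
        have : d ≤ δ/2 := min_le_left _ _
        linarith [hv.2]
      · exact le_trans hu0 hv.1
    have hzero := gron (vx := fun t => F (x t)) (vy := fun t => F (y t))
      (K := 2 * M) (eps := 0) (delta := 0)
      (hcx.mono (fun v hv => le_trans hu0 hv.1))
      (hcy.mono (fun v hv => le_trans hu0 hv.1))
      (fun t ht => (hdx t (le_trans hu0 ht.1)).mono (Ici_subset_Ici.mpr (le_trans hu0 ht.1)))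
      (fun t ht => (hdy t (le_trans hu0 ht.1)).mono (Ici_subset_Ici.mpr (le_trans hu0 ht.1)))
      (fun t ht => by
        have hV := hkey t ⟨ht.1, le_of_lt ht.2⟩
        have := hM _ hV.1 _ hV.2
        linarith)
      (by simp [hxyu])
      (u + d) ⟨by linarith, le_refl _⟩
    rw [gronwallBound_ε0_δ0] at hzero
    have hxyd : x (u + d) = y (u + d) := by
      have hnn : (0:ℝ) ≤ ‖x (u + d) - y (u + d)‖ ^ 2 := by positivity
      have : ‖x (u + d) - y (u + d)‖ ^ 2 = 0 := le_antisymm hzero hnn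
      rw [pow_eq_zero_iff (by norm_num), norm_eq_zero, sub_eq_zero] at this
      exact this
    exact ⟨u + d, hxyd, lt_add_of_pos_right u hdpos,
      by have : d ≤ w - u := min_le_right _ _; linarith⟩



/-- Uniform one-sided Lipschitz constant on a compact set. -/
lemma osl_compact {F : E → E} {C : ℝ} (hC : ∀ z, ‖F z‖ ≤ C)
    (hosl : ∀ xs : E, ∃ V : Set E, IsOpen V ∧ xs ∈ V ∧ ∃ M : ℝ, 0 < M ∧
      ∀ x ∈ V, ∀ y ∈ V, ⟪F x - F y, x - y⟫ ≤ M * ‖x - y‖ ^ 2)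
    {K : Set E} (hK : IsCompact K) :
    ∃ M : ℝ, 0 < M ∧ ∀ x ∈ K, ∀ y ∈ K, ⟪F x - F y, x - y⟫ ≤ M * ‖x - y‖ ^ 2 := by
  have hC0 : 0 ≤ C := le_trans (norm_nonneg _) (hC 0)
  rcases K.eq_empty_or_nonempty with rfl | hne
  · exact ⟨1, one_pos, by simp⟩
  choose V hVopen hVmem M hMpos hM using hosl
  obtain ⟨s, hs⟩ := hK.elim_finite_subcover V hVopen (fun z _ => mem_iUnion.2 ⟨z, hVmem z⟩)
  have hsne : s.Nonempty := by
    obtain ⟨z, hz⟩ := hne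
    obtain ⟨i, hi, _⟩ := mem_iUnion₂.1 (hs hz)
    exact ⟨i, hi⟩
  set M₀ : ℝ := s.sup' hsne M with hM₀def
  have hM₀pos : 0 < M₀ := by
    obtain ⟨i, hi⟩ := hsne
    exact lt_of_lt_of_le (hMpos i) (Finset.le_sup' M hi)
  have hcov : K ⊆ ⋃ i : s, V i := by
    intro z hz
    obtain ⟨i, hi, hzi⟩ := mem_iUnion₂.1 (hs hz)
    exact mem_iUnion.2 ⟨⟨i, hi⟩, hzi⟩
  obtain ⟨δ, hδpos, hleb⟩ :=
    lebesgue_number_lemma_of_metric hK (fun i : s => hVopen i) hcov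
  refine ⟨M₀ + 2 * C / δ + 1, by positivity, fun x hx y hy => ?_⟩
  have h2Cδ : 0 ≤ 2 * C / δ := by positivity
  have hnn : (0:ℝ) ≤ ‖x - y‖ ^ 2 := by positivity
  rcases lt_or_ge (dist x y) δ with hlt | hge
  · obtain ⟨i, hball⟩ := hleb x hx
    have hxV : x ∈ V i := hball (Metric.mem_ball_self hδpos)
    have hyV : y ∈ V i := hball (by rwa [Metric.mem_ball, dist_comm])
    have h1 : ⟪F x - F y, x - y⟫ ≤ M (i : E) * ‖x - y‖ ^ 2 := hM _ _ hxV _ hyV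
    have h2 : M (i : E) ≤ M₀ := Finset.le_sup' M i.2
    nlinarith
  · have h1 : ⟪F x - F y, x - y⟫ ≤ ‖F x - F y‖ * ‖x - y‖ := real_inner_le_norm _ _
    have h2 : ‖F x - F y‖ ≤ 2 * C := by
      calc ‖F x - F y‖ ≤ ‖F x‖ + ‖F y‖ := norm_sub_le _ _
      _ ≤ 2 * C := by linarith [hC x, hC y]
    have h3 : δ ≤ ‖x - y‖ := by rwa [dist_eq_norm] at hge
    have h4 : 2 * C * ‖x - y‖ ≤ 2 * C / δ * ‖x - y‖ ^ 2 := by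
      rw [div_mul_eq_mul_div, le_div_iff₀ hδpos]
      have := mul_le_mul_of_nonneg_left h3 (by positivity : (0:ℝ) ≤ 2 * C * ‖x - y‖)
      nlinarith
    nlinarith [norm_nonneg (F x - F y), norm_nonneg (x - y)]


section Euler



lemma contOn_union_closed {f : ℝ → E} {s t : Set ℝ} (hs : IsClosed s) (ht : IsClosed t)
    (hfs : ContinuousOn f s) (hft : ContinuousOn f t) : ContinuousOn f (s ∪ t) := by
  intro x hx
  apply ContinuousWithinAt.union
  · by_cases hm : x ∈ s
    · exact hfs x hm
    · exact continuousWithinAt_of_notMem_closure (by rwa [hs.closure_eq])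
  · by_cases hm : x ∈ t
    · exact hft x hm
    · exact continuousWithinAt_of_notMem_closure (by rwa [ht.closure_eq])

variable (F : E → E) (x₀ : E) (h : ℝ)

/-- Euler polygon nodes. -/
noncomputable def eP : ℕ → E
  | 0 => x₀
  | (k+1) => eP k + h • F (eP k)

/-- Euler polygon. -/
noncomputable def eE (t : ℝ) : E :=
  eP F x₀ h ⌊t / h⌋₊ + (t - h * ⌊t / h⌋₊) • F (eP F x₀ h ⌊t / h⌋₊)

variable {h} (hh : 0 < h)
include hh

lemma floor_eq_of_mem {k : ℕ} {s : ℝ} (h1 : h * k ≤ s) (h2 : s < h * (k+1)) :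
    ⌊s / h⌋₊ = k := by
  have hs : 0 ≤ s := le_trans (by positivity) h1
  rw [Nat.floor_eq_iff (by positivity)]
  constructor
  · rw [le_div_iff₀ hh]; linarith
  · rw [div_lt_iff₀ hh]; push_cast; linarith

lemma eE_affine {k : ℕ} {s : ℝ} (hs : s ∈ Icc (h * k) (h * (k+1))) :
    eE F x₀ h s = eP F x₀ h k + (s - h * k) • F (eP F x₀ h k) := by
  rcases lt_or_eq_of_le hs.2 with hlt | heq
  · rw [eE, floor_eq_of_mem hh hs.1 (by push_cast; push_cast at hlt; linarith)]
  · subst heq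
    rw [eE]
    have : ⌊h * (k+1) / h⌋₊ = k + 1 := by
      rw [mul_div_cancel_left₀ _ (ne_of_gt hh), ← Nat.cast_add_one, Nat.floor_natCast]
    rw [this]
    show eP F x₀ h (k+1) + _ = _
    rw [eP]
    push_cast
    rw [show h * (k+1) - h * ((k:ℝ)+1) = 0 by ring, zero_smul, add_zero,
      show h * ((k:ℝ)+1) - h * k = h by ring]

lemma eE_zero : eE F x₀ h 0 = x₀ := by
  have h0 : (0:ℝ) ∈ Icc (h * (0:ℕ)) (h * ((0:ℕ)+1)) := by
    constructor <;> simp <;> positivity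
  rw [eE_affine F x₀ hh h0]
  simp [eP]

lemma eE_grid (k : ℕ) : eE F x₀ h (h * k) = eP F x₀ h k := by
  rw [eE_affine F x₀ hh ⟨le_refl _, by nlinarith [hh]⟩]
  simp

lemma eE_hasDeriv {t : ℝ} (ht : 0 ≤ t) :
    HasDerivWithinAt (eE F x₀ h) (F (eP F x₀ h ⌊t / h⌋₊)) (Ici t) t := by
  set k := ⌊t / h⌋₊ with hk
  have h1 : h * k ≤ t := by
    rw [← le_div_iff₀' hh]
    exact Nat.floor_le (by positivity)
  have h2 : t < h * (k + 1) := by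
    rw [← div_lt_iff₀' hh]
    push_cast
    exact Nat.lt_floor_add_one _
  set L : ℝ → E := fun s => eP F x₀ h k + (s - h * k) • F (eP F x₀ h k) with hL
  have hLd : HasDerivWithinAt L (F (eP F x₀ h k)) (Ici t) t := by
    have : HasDerivAt L (F (eP F x₀ h k)) t := by
      have hid : HasDerivAt (fun s : ℝ => s - h * k) 1 t :=
        (hasDerivAt_id t).sub_const _
      simpa [hL] using (hid.smul_const (F (eP F x₀ h k))).const_add (eP F x₀ h k)
    exact this.hasDerivWithinAt
  apply hLd.congr_of_eventuallyEq
  · have hmem : Ici t ∩ Iio (h * (k+1)) ∈ 𝓝[Ici t] t :=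
      inter_mem self_mem_nhdsWithin (eventually_nhdsWithin_of_eventually_nhds
        (Iio_mem_nhds h2))
    filter_upwards [hmem] with s hs
    exact eE_affine F x₀ hh ⟨le_trans h1 hs.1, le_of_lt hs.2⟩
  · exact eE_affine F x₀ hh ⟨h1, le_of_lt h2⟩

lemma eE_contOn_aux (k : ℕ) : ContinuousOn (eE F x₀ h) (Icc 0 (h * k)) := by
  induction k with
  | zero => simpa using continuousOn_singleton _ _
  | succ k ih =>
    have hsplit : Icc (0:ℝ) (h * (k+1)) = Icc 0 (h * k) ∪ Icc (h * k) (h * (k+1)) := by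
      rw [Icc_union_Icc_eq_Icc (by positivity) (by push_cast; nlinarith [hh])]
    push_cast
    rw [hsplit]
    apply contOn_union_closed isClosed_Icc isClosed_Icc ih
    have : ContinuousOn (fun s => eP F x₀ h k + (s - h * k) • F (eP F x₀ h k))
        (Icc (h * k) (h * (k+1))) := by fun_prop
    exact this.congr (fun s hs => eE_affine F x₀ hh hs)

lemma eE_contOn {b : ℝ} : ContinuousOn (eE F x₀ h) (Icc 0 b) := by
  rcases le_or_gt b 0 with hb | hb
  · rcases lt_or_eq_of_le hb with hb' | hb'
    · rw [Icc_eq_empty (by linarith)]; exact continuousOn_empty _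
    · subst hb'; simpa using continuousOn_singleton _ _
  · apply (eE_contOn_aux F x₀ hh ⌈b / h⌉₊).mono
    apply Icc_subset_Icc_right
    rw [← div_le_iff₀' hh]
    exact Nat.le_ceil _

variable {C : ℝ} (hC : ∀ z, ‖F z‖ ≤ C)
include hC

lemma eE_lag {t : ℝ} (ht : 0 ≤ t) :
    ‖eE F x₀ h t - eP F x₀ h ⌊t / h⌋₊‖ ≤ C * h := by
  set k := ⌊t / h⌋₊ with hk
  have h1 : h * k ≤ t := by
    rw [← le_div_iff₀' hh]; exact Nat.floor_le (by positivity)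
  have h2 : t < h * (k + 1) := by
    rw [← div_lt_iff₀' hh]; push_cast; exact Nat.lt_floor_add_one _
  rw [eE]
  rw [add_sub_cancel_left, norm_smul, Real.norm_eq_abs, abs_of_nonneg (by linarith)]
  have := hC (eP F x₀ h k)
  have hC0 : 0 ≤ C := le_trans (norm_nonneg _) this
  calc (t - h * k) * ‖F (eP F x₀ h k)‖ ≤ h * C := by nlinarith
  _ = C * h := mul_comm _ _

lemma eE_dist {a b : ℝ} (ha : 0 ≤ a) (hab : a ≤ b) :
    ‖eE F x₀ h b - eE F x₀ h a‖ ≤ C * (b - a) := by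
  have := norm_image_sub_le_of_norm_deriv_right_le_segment
    (f := eE F x₀ h) (f' := fun s => F (eP F x₀ h ⌊s / h⌋₊)) (a := a) (b := b)
    ((eE_contOn F x₀ hh).mono (Icc_subset_Icc_left ha))
    (fun s hs => eE_hasDeriv F x₀ hh (le_trans ha hs.1))
    (fun s _ => hC _)
  exact this b ⟨hab, le_refl b⟩

lemma eE_dist_x₀ {t : ℝ} (ht : 0 ≤ t) : ‖eE F x₀ h t - x₀‖ ≤ C * t := by
  have := eE_dist F x₀ hh hC (le_refl (0:ℝ)) ht
  rwa [eE_zero F x₀ hh, sub_zero] at this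


end Euler

section Existence

variable {E : Type*} [NormedAddCommGroup E] [InnerProductSpace ℝ E]
  [CompleteSpace E] [ProperSpace E] [SecondCountableTopology E]

lemma exists_sol {F : E → E} {C : ℝ}
    (hC : ∀ z, ‖F z‖ ≤ C) (hcont : Continuous F)
    (hosl : ∀ xs : E, ∃ V : Set E, IsOpen V ∧ xs ∈ V ∧ ∃ M : ℝ, 0 < M ∧
      ∀ x ∈ V, ∀ y ∈ V, ⟪F x - F y, x - y⟫ ≤ M * ‖x - y‖ ^ 2)
    (x₀ : E) :
    ∃ x : ℝ → E, x 0 = x₀ ∧ ∀ t ∈ Ici (0:ℝ), HasDerivWithinAt x (F (x t)) (Ici (0:ℝ)) t := by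
  classical
  have hC0 : 0 ≤ C := le_trans (norm_nonneg _) (hC 0)
  set h : ℕ → ℝ := fun n => 1 / (n + 1) with hhdef
  have hh : ∀ n, 0 < h n := fun n => by positivity
  have hh1 : ∀ n, h n ≤ 1 := fun n => by
    rw [hhdef]
    rw [div_le_one (by positivity)]
    push_cast; linarith
  set e : ℕ → ℝ → E := fun n => eE F x₀ (h n) with hedef
  set q : ℕ → ℝ → E := fun n t => eP F x₀ (h n) ⌊t / h n⌋₊ with hqdef
  have f1 : ∀ n t, 0 ≤ t → HasDerivWithinAt (e n) (F (q n t)) (Ici t) t :=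
    fun n t ht => eE_hasDeriv F x₀ (hh n) ht
  have f2 : ∀ n (b : ℝ), ContinuousOn (e n) (Icc 0 b) :=
    fun n b => eE_contOn F x₀ (hh n)
  have f3 : ∀ n t, 0 ≤ t → ‖e n t - q n t‖ ≤ C * h n :=
    fun n t ht => eE_lag F x₀ (hh n) hC ht
  have f4 : ∀ n (a b : ℝ), 0 ≤ a → a ≤ b → ‖e n b - e n a‖ ≤ C * (b - a) :=
    fun n a b ha hab => eE_dist F x₀ (hh n) hC ha hab
  have f5 : ∀ n, e n 0 = x₀ := fun n => eE_zero F x₀ (hh n)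
  have f6 : ∀ n t, 0 ≤ t → ‖e n t - x₀‖ ≤ C * t :=
    fun n t ht => eE_dist_x₀ F x₀ (hh n) hC ht
  -- small steps eventually
  have hsmall : ∀ d : ℝ, 0 < d → ∃ N : ℕ, ∀ n ≥ N, C * h n < d := by
    intro d hd
    obtain ⟨N, hN⟩ := exists_nat_gt (C / d)
    refine ⟨N, fun n hn => ?_⟩
    rw [hhdef]
    rw [mul_one_div, div_lt_iff₀ (by positivity)]
    have : C / d < (n:ℝ) + 1 := by
      have : (N:ℝ) ≤ n := Nat.cast_le.mpr hn
      linarith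
    rw [div_lt_iff₀ hd] at this
    linarith [this]
  -- the key uniform Cauchy estimate
  have claim : ∀ T : ℝ, 0 ≤ T → ∀ ε : ℝ, 0 < ε → ∃ N : ℕ, ∀ m ≥ N, ∀ n ≥ N,
      ∀ t ∈ Icc (0:ℝ) T, ‖e m t - e n t‖ ^ 2 ≤ ε := by
    intro T hT ε hε
    set R : ℝ := C * (T + 1) with hRdef
    set K : Set E := Metric.closedBall x₀ R with hKdef
    have hKcompact : IsCompact K := isCompact_closedBall x₀ R
    obtain ⟨M, hMpos, hM⟩ := osl_compact hC hosl hKcompact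
    have hmem_e : ∀ n, ∀ t ∈ Icc (0:ℝ) T, e n t ∈ K := by
      intro n t ht
      rw [hKdef, Metric.mem_closedBall, dist_eq_norm]
      have := f6 n t ht.1
      have : ‖e n t - x₀‖ ≤ C * T := le_trans this (by nlinarith [ht.2, ht.1])
      nlinarith
    have hmem_q : ∀ n, ∀ t ∈ Icc (0:ℝ) T, q n t ∈ K := by
      intro n t ht
      rw [hKdef, Metric.mem_closedBall, dist_eq_norm]
      have h1 : ‖q n t - e n t‖ ≤ C * h n := by
        rw [norm_sub_rev]; exact f3 n t ht.1
      have h2 : ‖e n t - x₀‖ ≤ C * T := le_trans (f6 n t ht.1) (by nlinarith [ht.2, ht.1])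
      have h3 : C * h n ≤ C * 1 := by nlinarith [hh1 n, hh n]
      calc ‖q n t - x₀‖ ≤ ‖q n t - e n t‖ + ‖e n t - x₀‖ := norm_sub_le_norm_sub_add_norm_sub _ _ _
        _ ≤ R := by rw [hRdef]; linarith
    set K' : ℝ := 2 * M + 1 with hK'def
    have hK'pos : 0 < K' := by positivity
    set εF : ℝ := min (1/2) (ε * K' * Real.exp (-(K' * T)) / 2) with hεFdef
    have hεFpos : 0 < εF := lt_min (by norm_num) (by positivity)
    have hεFhalf : εF ≤ 1/2 := min_le_left _ _
    obtain ⟨δF, hδFpos, hδF⟩ := Metric.uniformContinuousOn_iff.1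
      (hKcompact.uniformContinuousOn_of_continuous hcont.continuousOn) εF hεFpos
    obtain ⟨N, hN⟩ := hsmall δF hδFpos
    refine ⟨N, fun m hm n hn t ht => ?_⟩
    have hgron := gron (x := e m) (y := e n)
      (vx := fun t => F (q m t)) (vy := fun t => F (q n t))
      (a := 0) (b := T) (K := K') (eps := 2 * εF) (delta := 0)
      (f2 m T) (f2 n T)
      (fun t ht => f1 m t ht.1) (fun t ht => f1 n t ht.1)
      ?_ (by simp [f5]) t ht
    · rw [gronwallBound_of_K_ne_0 (ne_of_gt hK'pos)] at hgron
      have hexp : Real.exp (K' * (t - 0)) - 1 ≤ Real.exp (K' * T) := by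
        have h1 : K' * (t - 0) ≤ K' * T := by nlinarith [ht.2]
        have := Real.exp_le_exp.mpr h1
        linarith
      have hεF2 : 2 * εF ≤ ε * K' * Real.exp (-(K' * T)) := by
        have := min_le_right (1/2) (ε * K' * Real.exp (-(K' * T)) / 2)
        rw [hεFdef]
        linarith
      have hfin : 2 * εF / K' * Real.exp (K' * T) ≤ ε := by
        rw [div_mul_eq_mul_div, div_le_iff₀ hK'pos]
        calc 2 * εF * Real.exp (K' * T)
            ≤ ε * K' * Real.exp (-(K' * T)) * Real.exp (K' * T) :=
              mul_le_mul_of_nonneg_right hεF2 (Real.exp_pos _).le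
          _ = ε * K' := by
              rw [mul_assoc, ← Real.exp_add, neg_add_cancel, Real.exp_zero, mul_one]
          _ = ε * K' := rfl
      have h2 : 0 ≤ 2 * εF / K' := by positivity
      have := mul_le_mul_of_nonneg_left hexp h2
      calc ‖e m t - e n t‖ ^ 2 ≤ 0 * Real.exp (K' * (t - 0)) +
            2 * εF / K' * (Real.exp (K' * (t - 0)) - 1) := hgron
        _ ≤ 2 * εF / K' * Real.exp (K' * T) := by linarith
        _ ≤ ε := hfin
    · -- the one-sided bound
      intro s hs
      have hs0 : 0 ≤ s := hs.1
      have hsT : s ∈ Icc (0:ℝ) T := ⟨hs.1, le_of_lt hs.2⟩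
      set u : E := e m s - e n s with hudef
      have hqm : dist (q m s) (e m s) < δF := by
        rw [dist_eq_norm, norm_sub_rev]
        exact lt_of_le_of_lt (f3 m s hs0) (hN m hm)
      have hqn : dist (q n s) (e n s) < δF := by
        rw [dist_eq_norm, norm_sub_rev]
        exact lt_of_le_of_lt (f3 n s hs0) (hN n hn)
      have hFm : ‖F (q m s) - F (e m s)‖ ≤ εF := by
        have := hδF _ (hmem_q m s hsT) _ (hmem_e m s hsT) hqm
        rw [dist_eq_norm] at this
        exact this.le
      have hFn : ‖F (q n s) - F (e n s)‖ ≤ εF := by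
        have := hδF _ (hmem_q n s hsT) _ (hmem_e n s hsT) hqn
        rw [dist_eq_norm] at this
        exact this.le
      have hMest : ⟪F (e m s) - F (e n s), u⟫ ≤ M * ‖u‖ ^ 2 :=
        hM _ (hmem_e m s hsT) _ (hmem_e n s hsT)
      have e1 : ⟪F (q m s) - F (q n s), u⟫ = ⟪F (e m s) - F (e n s), u⟫
          + ⟪F (q m s) - F (e m s), u⟫ - ⟪F (q n s) - F (e n s), u⟫ := by
        simp only [inner_sub_left]; ring
      have i1 : ⟪F (q m s) - F (e m s), u⟫ ≤ εF * ‖u‖ := by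
        calc ⟪F (q m s) - F (e m s), u⟫ ≤ ‖F (q m s) - F (e m s)‖ * ‖u‖ :=
          real_inner_le_norm _ _
        _ ≤ εF * ‖u‖ := mul_le_mul_of_nonneg_right hFm (norm_nonneg _)
      have i2 : -⟪F (q n s) - F (e n s), u⟫ ≤ εF * ‖u‖ := by
        have habs := abs_real_inner_le_norm (F (q n s) - F (e n s)) u
        have := neg_abs_le ⟪F (q n s) - F (e n s), u⟫
        have hb : ‖F (q n s) - F (e n s)‖ * ‖u‖ ≤ εF * ‖u‖ :=
          mul_le_mul_of_nonneg_right hFn (norm_nonneg _)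
        linarith [abs_nonneg ⟪F (q n s) - F (e n s), u⟫]
      have hsq : 2 * ‖u‖ ≤ 1 + ‖u‖ ^ 2 := by nlinarith [sq_nonneg (1 - ‖u‖)]
      have h2εF : 2 * εF ≤ 1 := by linarith
      rw [e1]
      have key : 4 * (εF * ‖u‖) ≤ 2 * εF + ‖u‖ ^ 2 := by
        nlinarith [mul_le_mul_of_nonneg_left hsq hεFpos.le,
          mul_le_mul_of_nonneg_right h2εF (sq_nonneg ‖u‖)]
      rw [hK'def]
      nlinarith
  -- the sequence is Cauchy at every point
  have hcs : ∀ t : ℝ, CauchySeq (fun n => e n t) := by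
    intro t
    rcases le_or_gt 0 t with ht | ht
    · rw [Metric.cauchySeq_iff]
      intro ε hε
      obtain ⟨N, hNc⟩ := claim t ht ((ε/2)^2) (by positivity)
      refine ⟨N, fun m hm n hn => ?_⟩
      have := hNc m hm n hn t ⟨ht, le_refl t⟩
      rw [dist_eq_norm]
      nlinarith [norm_nonneg (e m t - e n t)]
    · have hconst : (fun n => e n t) = fun _ => x₀ + t • F x₀ := by
        funext n
        show eE F x₀ (h n) t = _
        rw [eE]
        have hfl : ⌊t / h n⌋₊ = 0 := Nat.floor_of_nonpos (by
          apply div_nonpos_of_nonpos_of_nonneg (le_of_lt ht) (hh n).le)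
        rw [hfl]
        show eP F x₀ (h n) 0 + _ • F (eP F x₀ (h n) 0) = _
        rw [eP]
        norm_num
      rw [hconst]
      exact cauchySeq_const _
  set x : ℝ → E := fun t => (cauchySeq_tendsto_of_complete (hcs t)).choose with hxdef
  have hx : ∀ t, Tendsto (fun n => e n t) atTop (𝓝 (x t)) :=
    fun t => (cauchySeq_tendsto_of_complete (hcs t)).choose_spec
  have hx0 : x 0 = x₀ := by
    have h1 : Tendsto (fun n => e n 0) atTop (𝓝 x₀) := by
      simp only [f5]; exact tendsto_const_nhds
    exact tendsto_nhds_unique (hx 0) h1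
  -- uniform convergence on [0, T]
  have hunif : ∀ T : ℝ, 0 ≤ T → ∀ ε : ℝ, 0 < ε → ∃ N : ℕ, ∀ n ≥ N,
      ∀ t ∈ Icc (0:ℝ) T, ‖e n t - x t‖ ≤ ε := by
    intro T hT ε hε
    obtain ⟨N, hNc⟩ := claim T hT (ε^2) (by positivity)
    refine ⟨N, fun n hn t ht => ?_⟩
    have hlim : Tendsto (fun m => ‖e n t - e m t‖) atTop (𝓝 ‖e n t - x t‖) :=
      (tendsto_const_nhds.sub (hx t)).norm
    apply le_of_tendsto hlim
    filter_upwards [eventually_ge_atTop N] with m hm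
    have := hNc n hn m hm t ht
    nlinarith [norm_nonneg (e n t - e m t)]
  -- Lipschitz bound for the limit
  have hxdist : ∀ a b : ℝ, 0 ≤ a → a ≤ b → ‖x b - x a‖ ≤ C * (b - a) := by
    intro a b ha hab
    apply le_of_tendsto ((hx b).sub (hx a)).norm
    filter_upwards with n using f4 n a b ha hab
  have hxcwa : ∀ t : ℝ, 0 ≤ t → ContinuousWithinAt x (Ici 0) t := by
    intro t ht
    rw [Metric.continuousWithinAt_iff]
    intro ε hε
    refine ⟨ε / (C + 1), by positivity, fun s hs hds => ?_⟩
    have hd : ‖x s - x t‖ ≤ C * |s - t| := by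
      rcases le_total t s with hle | hle
      · rw [abs_of_nonneg (by linarith)]; exact hxdist t s ht hle
      · rw [abs_of_nonpos (by linarith), norm_sub_rev]
        have := hxdist s t hs hle
        linarith [this]
    rw [Real.dist_eq] at hds
    rw [dist_eq_norm]
    have h1 : C * |s - t| ≤ C * (ε / (C + 1)) := by nlinarith [abs_nonneg (s - t)]
    have h2 : C * (ε / (C + 1)) < ε := by
      rw [mul_div_assoc']
      rw [div_lt_iff₀ (by positivity)]
      nlinarith
    linarith
  have hxcont : ContinuousOn x (Ici 0) := fun t ht => hxcwa t ht
  -- right derivative of the limit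
  have hder : ∀ t : ℝ, 0 ≤ t → HasDerivWithinAt x (F (x t)) (Ici t) t := by
    intro t ht
    rw [hasDerivWithinAt_iff_isLittleO, Asymptotics.isLittleO_iff]
    intro c hc
    obtain ⟨ρ, hρpos, hρ⟩ := Metric.continuousAt_iff.1
      (hcont.continuousAt : ContinuousAt F (x t)) c hc
    set δ₀ : ℝ := min 1 (ρ / (4 * (C + 1))) with hδ₀def
    have hδ₀pos : 0 < δ₀ := lt_min one_pos (by positivity)
    obtain ⟨N₁, hN₁⟩ := hunif (t + 1) (by linarith) (ρ / 4) (by positivity)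
    obtain ⟨N₂, hN₂⟩ := hsmall (ρ / 4) (by positivity)
    have hkey : ∀ z, t ≤ z → z < t + δ₀ →
        ‖x z - x t - (z - t) • F (x t)‖ ≤ c * ‖z - t‖ := by
      intro z hz1 hz2
      have hlim : Tendsto (fun n => ‖e n z - e n t - (z - t) • F (x t)‖) atTop
          (𝓝 ‖x z - x t - (z - t) • F (x t)‖) :=
        (((hx z).sub (hx t)).sub tendsto_const_nhds).norm
      have hcz : c * (z - t) = c * ‖z - t‖ := by
        rw [Real.norm_eq_abs, abs_of_nonneg (by linarith)]
      rw [← hcz]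
      apply le_of_tendsto hlim
      filter_upwards [eventually_ge_atTop (max N₁ N₂)] with n hn
      have hn1 : N₁ ≤ n := le_trans (le_max_left _ _) hn
      have hn2 : N₂ ≤ n := le_trans (le_max_right _ _) hn
      -- one-sided MVT estimate for e n on [t, z]
      have hcontg : ContinuousOn (fun s => e n s - (s - t) • F (x t)) (Icc t z) := by
        apply ContinuousOn.sub
        · exact (f2 n z).mono (fun s hs => ⟨le_trans ht hs.1, hs.2⟩)
        · fun_prop
      have hderg : ∀ s ∈ Ico t z, HasDerivWithinAt (fun s => e n s - (s - t) • F (x t))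
          (F (q n s) - F (x t)) (Ici s) s := by
        intro s hs
        have hs0 : 0 ≤ s := le_trans ht hs.1
        have hd1 := f1 n s hs0
        have hd2 : HasDerivWithinAt (fun s : ℝ => (s - t) • F (x t)) (F (x t)) (Ici s) s := by
          have : HasDerivAt (fun s : ℝ => (s - t) • F (x t)) ((1:ℝ) • F (x t)) s :=
            ((hasDerivAt_id s).sub_const t).smul_const _
          simpa using this.hasDerivWithinAt
        exact hd1.sub hd2
      have hboundg : ∀ s ∈ Ico t z, ‖F (q n s) - F (x t)‖ ≤ c := by
        intro s hs
        have hs0 : 0 ≤ s := le_trans ht hs.1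
        have hsz : s < t + δ₀ := lt_of_lt_of_le hs.2 (by linarith)
        have hsmem : s ∈ Icc 0 (t + 1) := ⟨hs0, by
          have : δ₀ ≤ 1 := min_le_left _ _
          linarith⟩
        have hb1 : ‖q n s - e n s‖ ≤ ρ / 4 := by
          rw [norm_sub_rev]
          exact le_of_lt (lt_of_le_of_lt (f3 n s hs0) (hN₂ n hn2))
        have hb2 : ‖e n s - x s‖ ≤ ρ / 4 := hN₁ n hn1 s hsmem
        have hb3 : ‖x s - x t‖ ≤ ρ / 4 := by
          have h1 := hxdist t s ht hs.1
          have h2 : s - t ≤ δ₀ := by linarith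
          have h3 : δ₀ ≤ ρ / (4 * (C + 1)) := min_le_right _ _
          have h4 : C * (s - t) ≤ C * (ρ / (4 * (C + 1))) := by
            nlinarith [hs.1]
          have h5 : C * (ρ / (4 * (C + 1))) ≤ ρ / 4 := by
            rw [mul_div_assoc']
            rw [div_le_div_iff₀ (by positivity) (by positivity)]
            nlinarith
          linarith
        have hdist : dist (q n s) (x t) < ρ := by
          rw [dist_eq_norm]
          have t1 := norm_add_le (q n s - e n s) (e n s - x s)
          have t2 := norm_add_le (q n s - e n s + (e n s - x s)) (x s - x t)
          have t3 : q n s - e n s + (e n s - x s) + (x s - x t) = q n s - x t := by abel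
          rw [t3] at t2
          linarith
        have := hρ hdist
        rw [dist_eq_norm] at this
        exact this.le
      have hmvt := norm_image_sub_le_of_norm_deriv_right_le_segment
        hcontg hderg hboundg z ⟨hz1, le_refl z⟩
      have heq2 : (fun s => e n s - (s - t) • F (x t)) z -
          (fun s => e n s - (s - t) • F (x t)) t = e n z - e n t - (z - t) • F (x t) := by
        simp only [sub_self, zero_smul, sub_zero]
        abel
      rwa [heq2] at hmvt
    filter_upwards [inter_mem self_mem_nhdsWithin
      (eventually_nhdsWithin_of_eventually_nhds
        (Iio_mem_nhds (lt_add_of_pos_right t hδ₀pos)))] with z hz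
    exact hkey z hz.1 hz.2
  -- integral representation and two-sided derivative
  have hFxcont : ∀ u : ℝ, 0 ≤ u → ContinuousOn (fun s => F (x s)) (Icc 0 u) :=
    fun u hu => hcont.comp_continuousOn (hxcont.mono (fun s hs => hs.1))
  have hint : ∀ u : ℝ, 0 ≤ u → x u = x₀ + ∫ s in (0:ℝ)..u, F (x s) := by
    intro u hu
    rcases eq_or_lt_of_le hu with heq | hlt
    · rw [← heq]
      simp [hx0]
    · have := intervalIntegral.integral_eq_sub_of_hasDeriv_right_of_le hu
        (hxcont.mono (fun s hs => hs.1))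
        (fun s hs => (hder s hs.1.le).mono Ioi_subset_Ici_self)
        (by
          apply ContinuousOn.intervalIntegrable
          rw [uIcc_of_le hu]
          exact hFxcont u hu)
      rw [this, hx0]
      abel
  refine ⟨x, hx0, ?_⟩
  intro t ht
  rcases eq_or_lt_of_le (mem_Ici.1 ht) with heq | hlt
  · rw [← heq]
    exact hder 0 (le_refl 0)
  · have hxat : ∀ s ∈ Ioi (0:ℝ), ContinuousAt x s := by
      intro s hs
      exact (hxcwa s hs.le).continuousAt (Ici_mem_nhds hs)
    have hFxat : ∀ s ∈ Ioi (0:ℝ), ContinuousAt (fun r => F (x r)) s :=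
      fun s hs => hcont.continuousAt.comp (hxat s hs)
    have hii : IntervalIntegrable (fun s => F (x s)) MeasureTheory.volume 0 t := by
      apply ContinuousOn.intervalIntegrable
      rw [uIcc_of_le hlt.le]
      exact hFxcont t hlt.le
    have hmeas := ContinuousAt.stronglyMeasurableAtFilter (μ := MeasureTheory.volume)
      isOpen_Ioi hFxat t hlt
    have hI : HasDerivAt (fun u : ℝ => x₀ + ∫ s in (0:ℝ)..u, F (x s)) (F (x t)) t := by
      have h1 := intervalIntegral.integral_hasDerivAt_right hii hmeas (hFxat t hlt)
      exact h1.const_add x₀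
    have hxeq : x =ᶠ[𝓝 t] fun u : ℝ => x₀ + ∫ s in (0:ℝ)..u, F (x s) := by
      filter_upwards [Ioi_mem_nhds hlt] with s hs
      exact hint s hs.le
    exact (hI.congr_of_eventuallyEq hxeq).hasDerivWithinAt

end Existence

end Stmt0

/-- existence and forward uniqueness for bounded continuous vector fields
satisfying a local one-sided Lipschitz condition. -/
theorem statement0 (N : ℕ)
    (F : EuclideanSpace ℝ (Fin N) → EuclideanSpace ℝ (Fin N))
    (hbdd : ∃ C : ℝ, ∀ x, ‖F x‖ ≤ C)
    (hcont : Continuous F)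
    (hosl : ∀ xs : EuclideanSpace ℝ (Fin N), ∃ V : Set (EuclideanSpace ℝ (Fin N)),
      IsOpen V ∧ xs ∈ V ∧ ∃ M : ℝ, 0 < M ∧
        ∀ x ∈ V, ∀ y ∈ V, ⟪F x - F y, x - y⟫ ≤ M * ‖x - y‖ ^ 2)
    (x₀ : EuclideanSpace ℝ (Fin N)) :
    (∃ x : ℝ → EuclideanSpace ℝ (Fin N), x 0 = x₀ ∧
      ∀ t ∈ Ici (0 : ℝ), HasDerivWithinAt x (F (x t)) (Ici (0 : ℝ)) t) ∧
    (∀ x y : ℝ → EuclideanSpace ℝ (Fin N),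
      x 0 = x₀ → (∀ t ∈ Ici (0 : ℝ), HasDerivWithinAt x (F (x t)) (Ici (0 : ℝ)) t) →
      y 0 = x₀ → (∀ t ∈ Ici (0 : ℝ), HasDerivWithinAt y (F (y t)) (Ici (0 : ℝ)) t) →
      ∀ t ∈ Ici (0 : ℝ), x t = y t) := by
  obtain ⟨C', hC'⟩ := hbdd
  have hC : ∀ z, ‖F z‖ ≤ max C' 0 := fun z => le_trans (hC' z) (le_max_left _ _)
  constructor
  · exact Stmt0.exists_sol hC hcont hosl x₀
  · intro x y hx0 hdx hy0 hdy
    exact Stmt0.uniq hosl x y (by rw [hx0, hy0]) hdx hdy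
end

section
/- Let α ∈ (0, 1/2). For every point Θ* ∈ ℝ^N there exist an open neighborhood V of Θ* in ℝ^N, a constant M ≥ 0, and vector fields F, G : V → ℝ^N such that: (1) H = F + G on V; (2) F is decreasing on V, i.e. (F(x) − F(y)) · (x − y) ≤ 0 for all x, y ∈ V; (3) G is Lipschitz-continuous on V; and consequently (4) H is one-sided Lipschitz on V: (H(x) − H(y)) · (x − y) ≤ M·|x − y|² for all x, y ∈ V. -/
open Real Set Filter Topology MeasureTheory RealInnerProductSpace

/-- The orthodromic distance of `θ` to `0` on the circle: `|θ̄|` where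
`θ̄ ≡ θ (mod 2π)`, `θ̄ ∈ (−π, π]`. -/
noncomputable def orthoDist (θ : ℝ) : ℝ := |θ - 2 * Real.pi * (round (θ / (2 * Real.pi)) : ℝ)|

/-- The singular interaction kernel `h(θ) = sin θ / |θ|_o^{2α}` (equal to `0` on `2πℤ`,
by the junk value convention `x / 0 = 0`). -/
noncomputable def hker (α θ : ℝ) : ℝ := Real.sin θ / orthoDist θ ^ (2 * α)
/-- The Kuramoto vector field `H_i(Θ) = Ω_i + (K/N) ∑_j h(θ_j − θ_i)`. -/
noncomputable def Hvec (N : ℕ) (K α : ℝ) (Ω : Fin N → ℝ)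
    (Θ : EuclideanSpace ℝ (Fin N)) : EuclideanSpace ℝ (Fin N) :=
  WithLp.toLp 2 (fun i => Ω i + (K / (N : ℝ)) * ∑ j, hker α (Θ j - Θ i))

/-! ### Auxiliary lemmas on `orthoDist` -/

lemma orthoDist_nonneg' (θ : ℝ) : 0 ≤ orthoDist θ := abs_nonneg _

lemma orthoDist_le (θ : ℝ) (m : ℤ) : orthoDist θ ≤ |θ - 2 * Real.pi * m| := by
  have h2 : (0:ℝ) < 2 * Real.pi := by positivity
  have key : |θ / (2*Real.pi) - round (θ / (2*Real.pi))| ≤ |θ / (2*Real.pi) - m| := by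
    by_contra hcon
    push_neg at hcon
    have h1 : |θ / (2*Real.pi) - round (θ / (2*Real.pi))| ≤ 1/2 := abs_sub_round _
    have h3 : |(m : ℝ) - round (θ / (2*Real.pi))| < 1 := by
      calc |(m : ℝ) - round (θ / (2*Real.pi))|
          ≤ |(m:ℝ) - θ / (2*Real.pi)| + |θ / (2*Real.pi) - round (θ / (2*Real.pi))| := abs_sub_le _ _ _
        _ < 1/2 + 1/2 := by rw [abs_sub_comm]; linarith
        _ = 1 := by norm_num
    have hz : |(m : ℤ) - round (θ / (2*Real.pi))| < 1 := by
      rw [← @Int.cast_lt ℝ]; push_cast; simpa [Int.cast_abs] using h3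
    have hmz : m = round (θ / (2*Real.pi)) := by
      have := Int.abs_lt_one_iff.mp hz; omega
    rw [hmz] at hcon
    exact absurd hcon (not_lt.2 le_rfl)
  have hmul := mul_le_mul_of_nonneg_left key (le_of_lt h2)
  have e1 : θ - 2*Real.pi*(round (θ / (2*Real.pi)) : ℝ) = (2*Real.pi) * (θ/(2*Real.pi) - round (θ / (2*Real.pi))) := by
    field_simp
  have e2 : θ - 2*Real.pi*(m:ℝ) = (2*Real.pi) * (θ/(2*Real.pi) - m) := by field_simp
  rw [orthoDist, e1, e2, abs_mul (2*Real.pi), abs_mul (2*Real.pi), abs_of_pos h2]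
  exact hmul

lemma orthoDist_neg (θ : ℝ) : orthoDist (-θ) = orthoDist θ := by
  have h1 : orthoDist (-θ) ≤ orthoDist θ := by
    calc orthoDist (-θ) ≤ |(-θ) - 2*Real.pi*((-(round (θ / (2*Real.pi)))) : ℤ)| := orthoDist_le _ _
      _ = |θ - 2*Real.pi*(round (θ / (2*Real.pi)) : ℝ)| := by push_cast; rw [← abs_neg]; ring_nf
      _ = orthoDist θ := rfl
  have h2 : orthoDist θ ≤ orthoDist (-θ) := by
    calc orthoDist θ ≤ |θ - 2*Real.pi*((-(round ((-θ) / (2*Real.pi)))) : ℤ)| := orthoDist_le θ _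
      _ = |(-θ) - 2*Real.pi*(round ((-θ) / (2*Real.pi)) : ℝ)| := by push_cast; rw [← abs_neg]; ring_nf
      _ = orthoDist (-θ) := rfl
  linarith

lemma round_eq_of_abs_lt {θ : ℝ} {k : ℤ} (h : |θ - 2*Real.pi*k| < Real.pi) :
    round (θ / (2*Real.pi)) = k := by
  have h2 : (0:ℝ) < 2 * Real.pi := by positivity
  have hb : |θ/(2*Real.pi) - k| < 1/2 := by
    have e2 : θ - 2*Real.pi*(k:ℝ) = (2*Real.pi) * (θ/(2*Real.pi) - k) := by field_simp
    rw [e2, abs_mul, abs_of_pos h2] at h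
    nlinarith [Real.pi_pos, abs_nonneg (θ/(2*Real.pi) - (k:ℝ))]
  have hb' := abs_lt.1 hb
  rw [round_eq, Int.floor_eq_iff]
  constructor <;> [push_cast; push_cast] <;> linarith

lemma orthoDist_eq_of_abs_lt {θ : ℝ} {k : ℤ} (h : |θ - 2*Real.pi*k| < Real.pi) :
    orthoDist θ = |θ - 2*Real.pi*k| := by
  rw [orthoDist, round_eq_of_abs_lt h]

lemma orthoDist_sub_le (a b : ℝ) : orthoDist a ≤ |a - b| + orthoDist b := by
  calc orthoDist a ≤ |a - 2*Real.pi*(round (b / (2*Real.pi)) : ℤ)| := orthoDist_le a _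
    _ ≤ |a - b| + |b - 2*Real.pi*(round (b / (2*Real.pi)) : ℝ)| := by
        have := abs_sub_le a b (2*Real.pi*(round (b / (2*Real.pi)) : ℝ))
        simpa using this
    _ = |a - b| + orthoDist b := rfl

lemma abs_orthoDist_sub (a b : ℝ) : |orthoDist a - orthoDist b| ≤ |a - b| := by
  rw [abs_sub_le_iff]
  constructor
  · have := orthoDist_sub_le a b; linarith
  · have := orthoDist_sub_le b a; rw [abs_sub_comm] at this; linarith

/-! ### The local model kernel and its monotonicity -/

/-- the local model kernel -/
noncomputable def hhat (α s : ℝ) : ℝ := Real.sin s / |s| ^ (2*α)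

lemma hker_neg (α θ : ℝ) : hker α (-θ) = - hker α θ := by
  rw [hker, hker, Real.sin_neg, orthoDist_neg, neg_div]

lemma hker_shift {θ : ℝ} {k : ℤ} (h : |θ - 2*Real.pi*k| < Real.pi) (α : ℝ) :
    hker α θ = hhat α (θ - 2*Real.pi*k) := by
  rw [hker, hhat, orthoDist_eq_of_abs_lt h]
  congr 1
  have := Real.sin_sub_int_mul_two_pi θ k
  rw [← this]
  ring_nf

lemma hhat_neg (α s : ℝ) : hhat α (-s) = - hhat α s := by
  simp [hhat, Real.sin_neg, abs_neg, neg_div]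

noncomputable def epsAux (α : ℝ) : ℝ := min (Real.sqrt (1 - 2*α)) 1

lemma epsAux_pos {α : ℝ} (hα : α ∈ Ioo (0:ℝ) (1/2)) : 0 < epsAux α := by
  obtain ⟨h0, h1⟩ := hα
  have : (0:ℝ) < 1 - 2*α := by linarith
  exact lt_min (Real.sqrt_pos.mpr this) one_pos

lemma epsAux_le_one {α : ℝ} : epsAux α ≤ 1 := min_le_right _ _

lemma epsAux_sq {α : ℝ} (hα : α ∈ Ioo (0:ℝ) (1/2)) : (epsAux α)^2 ≤ 1 - 2*α := by
  obtain ⟨h0, h1⟩ := hα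
  have h : (0:ℝ) ≤ 1 - 2*α := by linarith
  calc (epsAux α)^2 ≤ (Real.sqrt (1-2*α))^2 := by
        have h2 : 0 ≤ epsAux α := le_min (Real.sqrt_nonneg _) zero_le_one
        have h3 : epsAux α ≤ Real.sqrt (1 - 2*α) := min_le_left _ _
        nlinarith [Real.sqrt_nonneg (1-2*α)]
    _ = 1 - 2*α := Real.sq_sqrt h

lemma hhat_nonneg {α : ℝ} (hα : α ∈ Ioo (0:ℝ) (1/2)) {s : ℝ} (h0 : 0 ≤ s) (h1 : s ≤ 1) :
    0 ≤ hhat α s := by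
  apply div_nonneg
  · exact Real.sin_nonneg_of_nonneg_of_le_pi h0 (h1.trans (by linarith [Real.pi_gt_three]))
  · positivity

lemma hhat_strictMonoOn {α : ℝ} (hα : α ∈ Ioo (0:ℝ) (1/2)) :
    StrictMonoOn (hhat α) (Ioo 0 (epsAux α)) := by
  obtain ⟨ha0, ha1⟩ := hα
  apply strictMonoOn_of_deriv_pos (convex_Ioo _ _)
  · apply ContinuousOn.div
    · exact Real.continuous_sin.continuousOn
    · apply ContinuousOn.rpow_const (continuous_abs.continuousOn)
      intro x hx
      exact Or.inl (by have := hx.1; positivity)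
    · intro x hx
      have hx0 : 0 < x := hx.1
      have : (0:ℝ) < |x| := by rwa [abs_of_pos hx0]
      positivity
  · intro x hx
    rw [interior_Ioo] at hx
    obtain ⟨hx0, hxe⟩ := hx
    set p := 2*α with hp
    have hp0 : 0 < p := by positivity
    have hp1 : p < 1 := by simp [hp]; linarith
    have hev : (fun s => Real.sin s * s ^ (-p)) =ᶠ[nhds x] hhat α := by
      filter_upwards [Ioi_mem_nhds hx0] with s hs
      have hs0 : (0:ℝ) < s := hs
      rw [hhat, abs_of_pos hs0, Real.rpow_neg hs0.le, div_eq_mul_inv]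
    have hg : HasDerivAt (fun s => Real.sin s * s ^ (-p))
        (Real.cos x * x ^ (-p) + Real.sin x * (-p * x ^ (-p - 1))) x := by
      exact (Real.hasDerivAt_sin x).mul (Real.hasDerivAt_rpow_const (Or.inl hx0.ne'))
    have hd : deriv (hhat α) x = Real.cos x * x ^ (-p) + Real.sin x * (-p * x ^ (-p - 1)) := by
      rw [← hev.deriv_eq]; exact hg.deriv
    rw [hd]
    have hxpos : (0:ℝ) < x ^ (-p - 1) := Real.rpow_pos_of_pos hx0 _
    have hxp : x ^ (-p) = x ^ (-p-1) * x := by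
      rw [← Real.rpow_add_one hx0.ne']; ring_nf
    have hkey : p * Real.sin x < x * Real.cos x := by
      have hsin : Real.sin x ≤ x := Real.sin_le hx0.le
      have hcos : 1 - x^2/2 ≤ Real.cos x := Real.one_sub_sq_div_two_le_cos
      have hx1 : x < 1 := lt_of_lt_of_le hxe epsAux_le_one
      have hxsq : x^2 < 1 - p := by
        have := epsAux_sq ⟨ha0, ha1⟩
        nlinarith
      nlinarith [Real.sin_nonneg_of_nonneg_of_le_pi hx0.le (by nlinarith [Real.pi_gt_three] : x ≤ Real.pi)]
    calc (0:ℝ) < x ^ (-p-1) * (x * Real.cos x - p * Real.sin x) := by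
          apply mul_pos hxpos; linarith
      _ = Real.cos x * x ^ (-p) + Real.sin x * (-p * x ^ (-p - 1)) := by rw [hxp]; ring

lemma hhat_mono_pair {α : ℝ} (hα : α ∈ Ioo (0:ℝ) (1/2)) {a b : ℝ}
    (ha : |a| < epsAux α) (hb : |b| < epsAux α) (hab : a ≤ b) :
    hhat α a ≤ hhat α b := by
  have he1 := epsAux_le_one (α := α)
  have hnn : ∀ s : ℝ, 0 ≤ s → |s| < epsAux α → 0 ≤ hhat α s := fun s h0 h1 =>
    hhat_nonneg hα h0 (by rw [abs_of_nonneg h0] at h1; linarith)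
  have hmono := (hhat_strictMonoOn hα).monotoneOn
  rcases lt_trichotomy 0 a with h0a | h0a | h0a
  · have hbe : b < epsAux α := lt_of_abs_lt hb
    have hae : a < epsAux α := lt_of_abs_lt ha
    exact hmono ⟨h0a, hae⟩ ⟨lt_of_lt_of_le h0a hab, hbe⟩ hab
  · subst h0a
    have hz : hhat α 0 = 0 := by simp [hhat]
    rw [hz]
    exact hnn b hab hb
  · rcases le_or_gt b 0 with hb0 | hb0
    · have h1 : hhat α (-b) ≤ hhat α (-a) := by
        rcases eq_or_lt_of_le hb0 with hbz | hbz
        · rw [hbz]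
          simp only [neg_zero]
          have hz : hhat α 0 = 0 := by simp [hhat]
          rw [hz]
          exact hnn (-a) (by linarith) (by simpa [abs_neg] using ha)
        · exact hmono ⟨by linarith, by simpa [abs_of_neg hbz] using hb⟩
            ⟨by linarith, by simpa [abs_of_neg h0a] using ha⟩ (by linarith)
      have := neg_le_neg h1
      rwa [hhat_neg, hhat_neg, neg_neg, neg_neg] at this
    · have h1 : hhat α a ≤ 0 := by
        have := hnn (-a) (by linarith) (by simpa [abs_neg] using ha)
        rw [hhat_neg] at this; linarith
      have h2 : 0 ≤ hhat α b := hnn b hb0.le hb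
      linarith

/-! ### Lipschitz estimates -/

lemma sin_lip (a b : ℝ) : |Real.sin a - Real.sin b| ≤ |a - b| := by
  have h := (convex_univ : Convex ℝ (univ : Set ℝ)).norm_image_sub_le_of_norm_deriv_le
    (f := Real.sin) (fun x _ => Real.differentiable_sin x)
    (fun x _ => by rw [Real.deriv_sin]; exact Real.abs_cos_le_one x)
    (mem_univ b) (mem_univ a)
  simpa [Real.norm_eq_abs] using h

lemma rpow_lip {p c : ℝ} (hp0 : 0 < p) (hp1 : p < 1) (hc : 0 < c) {u v : ℝ}
    (hu : c ≤ u) (hv : c ≤ v) : |u ^ p - v ^ p| ≤ p * c ^ (p - 1) * |u - v| := by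
  have h := Convex.norm_image_sub_le_of_norm_deriv_le (s := Ici c)
    (f := fun t : ℝ => t ^ p) (C := p * c ^ (p-1))
    (fun x hx => (Real.hasDerivAt_rpow_const
      (Or.inl (ne_of_gt (lt_of_lt_of_le hc hx)))).differentiableAt)
    (fun x hx => by
      have hx0 : 0 < x := lt_of_lt_of_le hc hx
      rw [Real.deriv_rpow_const x p]
      rw [Real.norm_eq_abs, abs_mul, abs_of_pos hp0,
        abs_of_pos (Real.rpow_pos_of_pos hx0 _)]
      have : x ^ (p-1) ≤ c ^ (p-1) :=
        Real.rpow_le_rpow_of_nonpos hc hx (by linarith)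
      nlinarith)
    (convex_Ici c) (mem_Ici.2 hv) (mem_Ici.2 hu)
  simpa [Real.norm_eq_abs] using h

lemma quot_lip {p c A sa sb Da Db : ℝ} (hp0 : 0 < p) (hp1 : p < 1) (hc : 0 < c)
    (hDa : c ≤ Da) (hDb : c ≤ Db) (hsa : |sa| ≤ 1) (hsb : |sb| ≤ 1)
    (hs : |sa - sb| ≤ A) (hD : |Da - Db| ≤ A) :
    |sa / Da ^ p - sb / Db ^ p| ≤ (c ^ (-p) + p * c^(p-1) / (c^p * c^p)) * A := by
  have hA : 0 ≤ A := le_trans (abs_nonneg _) hs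
  set cp := c ^ p with hcp
  have hcp0 : 0 < cp := Real.rpow_pos_of_pos hc _
  have hDap : cp ≤ Da ^ p := Real.rpow_le_rpow hc.le hDa hp0.le
  have hDbp : cp ≤ Db ^ p := Real.rpow_le_rpow hc.le hDb hp0.le
  have hDap0 : 0 < Da ^ p := lt_of_lt_of_le hcp0 hDap
  have hDbp0 : 0 < Db ^ p := lt_of_lt_of_le hcp0 hDbp
  have e : sa / Da^p - sb / Db^p
      = (sa - sb)/(Da^p) + sb*(Db^p - Da^p)/(Da^p * Db^p) := by
    field_simp
    ring
  have h1 : |(sa - sb)/(Da^p)| ≤ A / cp := by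
    rw [abs_div, abs_of_pos hDap0]
    exact div_le_div₀ hA hs hcp0 hDap
  have h2 : |sb*(Db^p - Da^p)/(Da^p * Db^p)| ≤ (p * c^(p-1) * A) / (cp * cp) := by
    rw [abs_div, abs_mul]
    apply div_le_div₀
    · positivity
    · have h3 : |Db ^ p - Da ^ p| ≤ p * c^(p-1) * A := by
        calc |Db ^ p - Da ^ p| ≤ p * c^(p-1) * |Db - Da| := rpow_lip hp0 hp1 hc hDb hDa
          _ ≤ p * c^(p-1) * A := by
            have : |Db - Da| ≤ A := by rwa [abs_sub_comm]
            have hpc : (0:ℝ) ≤ p * c^(p-1) := by positivity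
            nlinarith
      calc |sb| * |Db ^ p - Da ^ p| ≤ 1 * (p * c^(p-1) * A) :=
        mul_le_mul hsb h3 (abs_nonneg _) zero_le_one
        _ = p * c^(p-1) * A := one_mul _
    · positivity
    · rw [abs_of_pos (by positivity : (0:ℝ) < Da^p * Db^p)]
      exact mul_le_mul hDap hDbp hcp0.le hDap0.le
  calc |sa / Da^p - sb / Db^p| ≤ |(sa - sb)/(Da^p)| + |sb*(Db^p - Da^p)/(Da^p * Db^p)| := by
        rw [e]; exact abs_add_le _ _
    _ ≤ A / cp + (p * c^(p-1) * A) / (cp * cp) := add_le_add h1 h2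
    _ = (c ^ (-p) + p * c^(p-1) / (c^p * c^p)) * A := by
        rw [Real.rpow_neg hc.le]
        field_simp
        ring

/-! ### Euclidean space helpers -/

lemma coord_le_norm {N : ℕ} (v : EuclideanSpace ℝ (Fin N)) (i : Fin N) : |v i| ≤ ‖v‖ := by
  rw [EuclideanSpace.norm_eq]
  have h1 : |v i| = Real.sqrt (‖v i‖^2) := by
    rw [Real.sqrt_sq_eq_abs, Real.norm_eq_abs, abs_abs]
  rw [h1]
  apply Real.sqrt_le_sqrt
  exact Finset.single_le_sum (f := fun j => ‖v j‖^2) (fun j _ => sq_nonneg _) (Finset.mem_univ i)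

lemma norm_le_of_coord {N : ℕ} (v : EuclideanSpace ℝ (Fin N)) (C : Fin N → ℝ) (t : ℝ)
    (ht : 0 ≤ t) (hC : ∀ i, 0 ≤ C i) (h : ∀ i, |v i| ≤ C i * t) :
    ‖v‖ ≤ Real.sqrt (∑ i, (C i)^2) * t := by
  rw [EuclideanSpace.norm_eq]
  have h1 : ∀ i, ‖v i‖^2 ≤ (C i)^2 * t^2 := by
    intro i
    have := h i
    have h2 : ‖v i‖ = |v i| := Real.norm_eq_abs _
    nlinarith [abs_nonneg (v i), mul_nonneg (hC i) ht]
  calc Real.sqrt (∑ i, ‖v i‖^2) ≤ Real.sqrt (∑ i, (C i)^2 * t^2) :=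
        Real.sqrt_le_sqrt (Finset.sum_le_sum (fun i _ => h1 i))
    _ = Real.sqrt ((∑ i, (C i)^2) * t^2) := by rw [← Finset.sum_mul]
    _ = Real.sqrt (∑ i, (C i)^2) * t := by
        rw [Real.sqrt_mul (Finset.sum_nonneg fun i _ => sq_nonneg _), Real.sqrt_sq ht]

lemma inner_eq_sum {N : ℕ} (u v : EuclideanSpace ℝ (Fin N)) : ⟪u, v⟫ = ∑ i, u i * v i := by
  simp [PiLp.inner_apply, RCLike.inner_apply, conj_trivial]
  exact Finset.sum_congr rfl (fun _ _ => mul_comm _ _)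

/-- in the subcritical regime `α ∈ (0, 1/2)`, around every point the Kuramoto
vector field `H` decomposes as a decreasing plus a Lipschitz vector field, and in particular
`H` is locally one-sided Lipschitz. -/
theorem statement1 (N : ℕ) (K α : ℝ) (hK : 0 < K) (hα : α ∈ Ioo (0 : ℝ) (1 / 2))
    (Ω : Fin N → ℝ) (Θs : EuclideanSpace ℝ (Fin N)) :
    ∃ V : Set (EuclideanSpace ℝ (Fin N)), IsOpen V ∧ Θs ∈ V ∧
    ∃ M : ℝ, 0 ≤ M ∧
    ∃ F G : EuclideanSpace ℝ (Fin N) → EuclideanSpace ℝ (Fin N),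
      (∀ x ∈ V, Hvec N K α Ω x = F x + G x) ∧
      (∀ x ∈ V, ∀ y ∈ V, ⟪F x - F y, x - y⟫ ≤ 0) ∧
      (∃ L : NNReal, LipschitzOnWith L G V) ∧
      (∀ x ∈ V, ∀ y ∈ V,
        ⟪Hvec N K α Ω x - Hvec N K α Ω y, x - y⟫ ≤ M * ‖x - y‖ ^ 2) := by
  classical
  obtain ⟨hα0, hα2⟩ := hα
  have hπ : (1:ℝ) < Real.pi := by linarith [Real.pi_gt_three]
  have hε0 : 0 < epsAux α := epsAux_pos ⟨hα0, hα2⟩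
  have hε1 : epsAux α ≤ 1 := epsAux_le_one
  have hKN : (0:ℝ) ≤ K / N := by positivity
  -- the neighborhood
  set ρ : Fin N → Fin N → ℝ := fun i j =>
    if orthoDist (Θs j - Θs i) = 0 then epsAux α else orthoDist (Θs j - Θs i) / 2 with hρ
  have hρpos : ∀ i j, 0 < ρ i j := by
    intro i j
    simp only [hρ]
    split
    · exact hε0
    · rename_i h
      have := orthoDist_nonneg' (Θs j - Θs i)
      rcases lt_or_eq_of_le this with h' | h'
      · linarith
      · exact absurd h'.symm h
  set V : Set (EuclideanSpace ℝ (Fin N)) :=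
    ⋂ i, ⋂ j, {x : EuclideanSpace ℝ (Fin N) | |x j - x i - (Θs j - Θs i)| < ρ i j} with hV
  have hVopen : IsOpen V := by
    apply isOpen_iInter_of_finite
    intro i
    apply isOpen_iInter_of_finite
    intro j
    exact isOpen_lt (Continuous.abs (((EuclideanSpace.proj j).continuous.sub
      (EuclideanSpace.proj i).continuous).sub continuous_const)) continuous_const
  have hΘV : Θs ∈ V := by
    simp only [hV, mem_iInter, mem_setOf_eq]
    intro i j
    simpa using hρpos i j
  have hmemV : ∀ x ∈ V, ∀ i j, |x j - x i - (Θs j - Θs i)| < ρ i j := by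
    intro x hx i j
    simp only [hV, mem_iInter, mem_setOf_eq] at hx
    exact hx i j
  -- the singular part of the kernel
  set f : Fin N → Fin N → ℝ → ℝ := fun i j θ =>
    if orthoDist (Θs j - Θs i) = 0 then hker α θ else 0 with hf
  have hskew : ∀ i j θ, f j i (-θ) = - f i j θ := by
    intro i j θ
    have he : Θs i - Θs j = -(Θs j - Θs i) := by ring
    simp only [hf, he, orthoDist_neg]
    split
    · exact hker_neg α θ
    · simp
  -- per-pair monotonicity on V
  have hmono : ∀ x ∈ V, ∀ y ∈ V, ∀ i j,
      0 ≤ (f i j (x j - x i) - f i j (y j - y i)) * ((x j - x i) - (y j - y i)) := by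
    intro x hx y hy i j
    by_cases hsing : orthoDist (Θs j - Θs i) = 0
    · simp only [hf, if_pos hsing]
      set k : ℤ := round ((Θs j - Θs i) / (2*Real.pi)) with hk
      have hδ : Θs j - Θs i = 2*Real.pi*(k:ℝ) := by
        have := abs_eq_zero.mp hsing
        linarith [sub_eq_zero.mp this]
      have hax : |x j - x i - 2*Real.pi*(k:ℝ)| < epsAux α := by
        rw [← hδ]
        have := hmemV x hx i j
        simp only [hρ, if_pos hsing] at this
        exact this
      have hay : |y j - y i - 2*Real.pi*(k:ℝ)| < epsAux α := by
        rw [← hδ]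
        have := hmemV y hy i j
        simp only [hρ, if_pos hsing] at this
        exact this
      have hx' : hker α (x j - x i) = hhat α ((x j - x i) - 2*Real.pi*k) :=
        hker_shift (by
          calc |x j - x i - 2*Real.pi*(k:ℝ)| < epsAux α := hax
            _ ≤ 1 := hε1
            _ < Real.pi := hπ) α
      have hy' : hker α (y j - y i) = hhat α ((y j - y i) - 2*Real.pi*k) :=
        hker_shift (by
          calc |y j - y i - 2*Real.pi*(k:ℝ)| < epsAux α := hay
            _ ≤ 1 := hε1
            _ < Real.pi := hπ) α
      rw [hx', hy']
      set a := (x j - x i) - 2*Real.pi*(k:ℝ) with hadef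
      set b := (y j - y i) - 2*Real.pi*(k:ℝ) with hbdef
      have hab : (x j - x i) - (y j - y i) = a - b := by rw [hadef, hbdef]; ring
      rw [hab]
      rcases le_total a b with h | h
      · have := hhat_mono_pair ⟨hα0, hα2⟩ hax hay h
        have e : (hhat α a - hhat α b) * (a - b) = (hhat α b - hhat α a) * (b - a) := by ring
        rw [e]
        exact mul_nonneg (by linarith) (by linarith)
      · have := hhat_mono_pair ⟨hα0, hα2⟩ hay hax h
        exact mul_nonneg (by linarith) (by linarith)
    · simp [hf, if_neg hsing]
  -- per-pair Lipschitz constant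
  set Lp : Fin N → Fin N → ℝ := fun i j =>
    if orthoDist (Θs j - Θs i) = 0 then 0 else
      ((orthoDist (Θs j - Θs i)/2) ^ (-(2*α)) +
        (2*α) * (orthoDist (Θs j - Θs i)/2)^(2*α-1) /
          ((orthoDist (Θs j - Θs i)/2)^(2*α) * (orthoDist (Θs j - Θs i)/2)^(2*α))) with hLp
  have hLp0 : ∀ i j, 0 ≤ Lp i j := by
    intro i j
    simp only [hLp]
    split
    · exact le_refl 0
    · have h0 := orthoDist_nonneg' (Θs j - Θs i)
      positivity
  -- per-pair Lipschitz estimate for the regular part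
  have hlip : ∀ x ∈ V, ∀ y ∈ V, ∀ i j,
      |(hker α (x j - x i) - f i j (x j - x i)) - (hker α (y j - y i) - f i j (y j - y i))|
        ≤ Lp i j * |(x j - x i) - (y j - y i)| := by
    intro x hx y hy i j
    by_cases hsing : orthoDist (Θs j - Θs i) = 0
    · simp [hf, if_pos hsing, hLp]
    · simp only [hf, if_neg hsing, sub_zero, hLp]
      set d := orthoDist (Θs j - Θs i) with hd
      have hd0 : 0 < d := by
        rcases lt_or_eq_of_le (orthoDist_nonneg' (Θs j - Θs i)) with h' | h'
        · exact h'
        · exact absurd h'.symm hsing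
      set c := d/2 with hc
      have hc0 : 0 < c := by positivity
      have hρx := hmemV x hx i j
      have hρy := hmemV y hy i j
      simp only [hρ, if_neg hsing] at hρx hρy
      have hDa : c ≤ orthoDist (x j - x i) := by
        have h5 := orthoDist_sub_le (Θs j - Θs i) (x j - x i)
        rw [abs_sub_comm] at h5
        rw [← hd] at h5 hρx
        rw [if_neg hsing] at hρx
        rw [hc]
        linarith
      have hDb : c ≤ orthoDist (y j - y i) := by
        have h5 := orthoDist_sub_le (Θs j - Θs i) (y j - y i)
        rw [abs_sub_comm] at h5
        rw [← hd] at h5 hρy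
        rw [if_neg hsing] at hρy
        rw [hc]
        linarith
      have h2α0 : 0 < 2*α := by linarith
      have h2α1 : 2*α < 1 := by linarith
      have key := quot_lip (p := 2*α) (c := c) (A := |(x j - x i) - (y j - y i)|)
        (sa := Real.sin (x j - x i)) (sb := Real.sin (y j - y i))
        (Da := orthoDist (x j - x i)) (Db := orthoDist (y j - y i))
        h2α0 h2α1 hc0 hDa hDb (Real.abs_sin_le_one _) (Real.abs_sin_le_one _)
        (sin_lip _ _) (abs_orthoDist_sub _ _)
      rw [hker, hker]
      calc |Real.sin (x j - x i) / orthoDist (x j - x i) ^ (2*α)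
            - Real.sin (y j - y i) / orthoDist (y j - y i) ^ (2*α)|
          ≤ (c ^ (-(2*α)) + (2*α) * c^(2*α-1) / (c^(2*α) * c^(2*α)))
              * |(x j - x i) - (y j - y i)| := key
        _ = _ := by rw [hc]
  -- definitions of F and G
  set F : EuclideanSpace ℝ (Fin N) → EuclideanSpace ℝ (Fin N) :=
    fun x => WithLp.toLp 2 (fun i => (K / (N:ℝ)) * ∑ j, f i j (x j - x i)) with hF
  set G : EuclideanSpace ℝ (Fin N) → EuclideanSpace ℝ (Fin N) :=
    fun x => WithLp.toLp 2 (fun i => Ω i + (K / (N:ℝ)) * ∑ j, (hker α (x j - x i) - f i j (x j - x i))) with hG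
  -- the constants
  set C : Fin N → ℝ := fun i => 2*(K/(N:ℝ))*∑ j, Lp i j with hC
  have hC0 : ∀ i, 0 ≤ C i := by
    intro i
    have : (0:ℝ) ≤ ∑ j, Lp i j := Finset.sum_nonneg fun j _ => hLp0 i j
    rw [hC]
    positivity
  set M := Real.sqrt (∑ i, (C i)^2) with hM
  have hM0 : 0 ≤ M := Real.sqrt_nonneg _
  -- decomposition
  have hHFG : ∀ x, Hvec N K α Ω x = F x + G x := by
    intro x
    ext i
    show Hvec N K α Ω x i = F x i + G x i
    rw [Hvec, hF, hG]
    simp only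
    rw [Finset.sum_sub_distrib]
    ring
  -- Lipschitz bound for G
  have hGdiff : ∀ x ∈ V, ∀ y ∈ V, ∀ i, |G x i - G y i| ≤ C i * ‖x - y‖ := by
    intro x hx y hy i
    have e : G x i - G y i = (K/(N:ℝ)) * ∑ j,
        ((hker α (x j - x i) - f i j (x j - x i)) - (hker α (y j - y i) - f i j (y j - y i))) := by
      simp only [hG, Finset.sum_sub_distrib, mul_sub]
      ring
    rw [e, abs_mul, abs_of_nonneg hKN]
    have hbound : ∀ j, |(hker α (x j - x i) - f i j (x j - x i))
        - (hker α (y j - y i) - f i j (y j - y i))| ≤ Lp i j * (2 * ‖x - y‖) := by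
      intro j
      refine le_trans (hlip x hx y hy i j) ?_
      apply mul_le_mul_of_nonneg_left _ (hLp0 i j)
      have h1 : |(x - y) j| ≤ ‖x - y‖ := coord_le_norm (x - y) j
      have h2 : |(x - y) i| ≤ ‖x - y‖ := coord_le_norm (x - y) i
      have e1 : (x - y) j = x j - y j := rfl
      have e2 : (x - y) i = x i - y i := rfl
      rw [e1] at h1; rw [e2] at h2
      calc |(x j - x i) - (y j - y i)| = |(x j - y j) - (x i - y i)| := by ring_nf
        _ ≤ |x j - y j| + |x i - y i| := abs_sub _ _
        _ ≤ 2 * ‖x - y‖ := by linarith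
    calc (K/(N:ℝ)) * |∑ j, ((hker α (x j - x i) - f i j (x j - x i))
            - (hker α (y j - y i) - f i j (y j - y i)))|
        ≤ (K/(N:ℝ)) * ∑ j, |(hker α (x j - x i) - f i j (x j - x i))
            - (hker α (y j - y i) - f i j (y j - y i))| :=
          mul_le_mul_of_nonneg_left (Finset.abs_sum_le_sum_abs _ _) hKN
      _ ≤ (K/(N:ℝ)) * ∑ j, Lp i j * (2 * ‖x - y‖) :=
          mul_le_mul_of_nonneg_left (Finset.sum_le_sum fun j _ => hbound j) hKN
      _ = C i * ‖x - y‖ := by rw [hC, ← Finset.sum_mul]; ring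
  have hGnorm : ∀ x ∈ V, ∀ y ∈ V, ‖G x - G y‖ ≤ M * ‖x - y‖ := by
    intro x hx y hy
    rw [hM]
    apply norm_le_of_coord (G x - G y) C ‖x - y‖ (norm_nonneg _) hC0
    intro i
    have e : (G x - G y) i = G x i - G y i := rfl
    rw [e]
    exact hGdiff x hx y hy i
  -- monotonicity of F
  have hFmono : ∀ x ∈ V, ∀ y ∈ V, ⟪F x - F y, x - y⟫ ≤ 0 := by
    intro x hx y hy
    rw [inner_eq_sum]
    set T : ℝ := ∑ i, ∑ j,
      (f i j (x j - x i) - f i j (y j - y i)) * (x i - y i) with hT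
    have hinner : ∑ i, (F x - F y) i * (x - y) i = (K/(N:ℝ)) * T := by
      rw [hT, Finset.mul_sum]
      apply Finset.sum_congr rfl
      intro i _
      have e : (F x - F y) i = (K/(N:ℝ)) * ∑ j, (f i j (x j - x i) - f i j (y j - y i)) := by
        show F x i - F y i = _
        rw [hF]
        simp only
        rw [← mul_sub, ← Finset.sum_sub_distrib]
      have e2 : (x - y) i = x i - y i := rfl
      rw [e, e2, Finset.mul_sum, Finset.mul_sum, Finset.sum_mul]
      apply Finset.sum_congr rfl
      intro j _
      ring
    rw [hinner]
    have hTswap : T = ∑ i, ∑ j,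
        (-(f i j (x j - x i)) + f i j (y j - y i)) * (x j - y j) := by
      rw [hT, Finset.sum_comm]
      apply Finset.sum_congr rfl
      intro i _
      apply Finset.sum_congr rfl
      intro j _
      have e1 : x i - x j = -(x j - x i) := by ring
      have e2 : y i - y j = -(y j - y i) := by ring
      rw [e1, e2, hskew, hskew]
      ring
    have h2T : T + T = ∑ i, ∑ j,
        -((f i j (x j - x i) - f i j (y j - y i)) * ((x j - x i) - (y j - y i))) := by
      nth_rewrite 2 [hTswap]
      rw [hT, ← Finset.sum_add_distrib]
      apply Finset.sum_congr rfl
      intro i _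
      rw [← Finset.sum_add_distrib]
      apply Finset.sum_congr rfl
      intro j _
      ring
    have hTneg : T + T ≤ 0 := by
      rw [h2T]
      apply Finset.sum_nonpos
      intro i _
      apply Finset.sum_nonpos
      intro j _
      exact neg_nonpos.2 (hmono x hx y hy i j)
    have hT0 : T ≤ 0 := by linarith
    exact mul_nonpos_of_nonneg_of_nonpos hKN hT0
  -- conclusion
  refine ⟨V, hVopen, hΘV, M, hM0, F, G, fun x _ => hHFG x, hFmono, ?_, ?_⟩
  · refine ⟨M.toNNReal, LipschitzOnWith.of_dist_le_mul fun x hx y hy => ?_⟩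
    rw [dist_eq_norm, dist_eq_norm, Real.coe_toNNReal _ hM0]
    exact hGnorm x hx y hy
  · intro x hx y hy
    have hde : Hvec N K α Ω x - Hvec N K α Ω y = (F x - F y) + (G x - G y) := by
      rw [hHFG x, hHFG y]; abel
    rw [hde, inner_add_left]
    have h1 := hFmono x hx y hy
    have h2 : ⟪G x - G y, x - y⟫ ≤ ‖G x - G y‖ * ‖x - y‖ := real_inner_le_norm _ _
    have h3 := mul_le_mul_of_nonneg_right (hGnorm x hx y hy) (norm_nonneg (x - y))
    have h4 : M * ‖x - y‖ * ‖x - y‖ = M * ‖x - y‖^2 := by ring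
    nlinarith [norm_nonneg (x - y)]
end

section
/- Let α ∈ (0, 1/2) and let Θ = (θ₁, …, θ_N) : [0, ∞) → ℝ^N be a global classical solution of the singular weighted Kuramoto system. Suppose that two oscillators collide at some time t* ≥ 0, i.e. θ_i(t*) ≡ θ_j(t*) (mod 2π) for some i ≠ j. Then the following are equivalent: (1) θ_i and θ_j stick together at t*, i.e. θ_i(s) ≡ θ_j(s) (mod 2π) for all s ≥ t*; (2) the natural frequencies agree: Ω_i = Ω_j. -/
open Real Set Filter Topology MeasureTheory

namespace Sticking

lemma two_pi_pos : (0:ℝ) < 2 * Real.pi := by positivity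

lemma two_pi_ne : (2 * Real.pi : ℝ) ≠ 0 := ne_of_gt two_pi_pos

noncomputable def del (α : ℝ) : ℝ := min 1 (Real.sqrt (2 * (1 - 2*α)))

noncomputable def Lco (α : ℝ) : ℝ := (Real.pi + 1) / (del α)^3

noncomputable def Cco (α : ℝ) : ℝ := Lco α * Real.pi^2 / 2

lemma del_pos {α : ℝ} (h2 : α < 1/2) : 0 < del α :=
  lt_min one_pos (Real.sqrt_pos.2 (by linarith))

lemma del_le_one (α : ℝ) : del α ≤ 1 := min_le_left _ _

lemma del_sq {α : ℝ} (h2 : α < 1/2) : (del α)^2 ≤ 2 * (1 - 2*α) := by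
  have h := min_le_right 1 (Real.sqrt (2 * (1 - 2*α)))
  calc (del α)^2 ≤ (Real.sqrt (2 * (1 - 2*α)))^2 :=
        pow_le_pow_left₀ (del_pos h2).le h 2
    _ = 2 * (1 - 2*α) := Real.sq_sqrt (by linarith)

lemma Lco_nonneg {α : ℝ} (h2 : α < 1/2) : 0 ≤ Lco α := by
  unfold Lco
  have := del_pos h2
  positivity

lemma Cco_nonneg {α : ℝ} (h2 : α < 1/2) : 0 ≤ Cco α := by
  unfold Cco
  have := Lco_nonneg h2
  positivity

lemma orthoDist_sub_int (θ : ℝ) (n : ℤ) : orthoDist (θ - 2 * Real.pi * n) = orthoDist θ := by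
  unfold orthoDist
  have h : (θ - 2 * Real.pi * n) / (2 * Real.pi) = θ / (2 * Real.pi) + (-n : ℤ) := by
    push_cast
    field_simp
    ring
  rw [h, round_add_intCast]
  push_cast
  congr 1
  ring

lemma orthoDist_eq (θ : ℝ) :
    orthoDist θ = (2 * Real.pi) * |θ / (2 * Real.pi) - round (θ / (2 * Real.pi))| := by
  have h : θ - 2 * Real.pi * round (θ / (2 * Real.pi))
      = 2 * Real.pi * (θ / (2 * Real.pi) - round (θ / (2 * Real.pi))) := by
    field_simp
  unfold orthoDist
  rw [h, abs_mul, abs_of_pos two_pi_pos]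

lemma abs_sub_round_neg (u : ℝ) : |(-u) - round (-u)| = |u - round u| := by
  rw [abs_sub_round_eq_min, abs_sub_round_eq_min]
  rcases eq_or_ne (Int.fract u) 0 with h | h
  · rw [h, Int.fract_neg_eq_zero.2 h]
  · rw [Int.fract_neg h, min_comm, sub_sub_cancel]

lemma orthoDist_neg (θ : ℝ) : orthoDist (-θ) = orthoDist θ := by
  rw [orthoDist_eq, orthoDist_eq, neg_div, abs_sub_round_neg]

lemma orthoDist_eq_self {x : ℝ} (h0 : 0 ≤ x) (hπ : x ≤ Real.pi) : orthoDist x = x := by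
  rcases eq_or_lt_of_le hπ with h | hlt
  · subst h
    unfold orthoDist
    have h1 : Real.pi / (2 * Real.pi) = 1/2 := by
      field_simp
    rw [h1, show round ((1:ℝ)/2) = 1 by norm_num [round_eq]]
    push_cast
    rw [abs_of_nonpos (by linarith [Real.pi_pos])]
    ring
  · unfold orthoDist
    have h1 : round (x / (2 * Real.pi)) = 0 := by
      rw [round_eq_zero_iff]
      constructor
      · have : 0 ≤ x / (2 * Real.pi) := div_nonneg h0 two_pi_pos.le
        linarith
      · rw [div_lt_iff₀ two_pi_pos]
        linarith
    rw [h1]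
    push_cast
    rw [mul_zero, sub_zero, abs_of_nonneg h0]

lemma hker_sub_int (α θ : ℝ) (n : ℤ) : hker α (θ - 2 * Real.pi * n) = hker α θ := by
  unfold hker
  rw [orthoDist_sub_int]
  congr 1
  rw [show θ - 2 * Real.pi * n = θ + (-n : ℤ) * (2 * Real.pi) by push_cast; ring,
    Real.sin_add_int_mul_two_pi]

lemma hker_neg (α θ : ℝ) : hker α (-θ) = -hker α θ := by
  unfold hker
  rw [Real.sin_neg, orthoDist_neg, neg_div]

lemma hker_eq_on (α : ℝ) {x : ℝ} (h0 : 0 ≤ x) (hπ : x ≤ Real.pi) :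
    hker α x = Real.sin x / x ^ (2*α) := by
  unfold hker
  rw [orthoDist_eq_self h0 hπ]

end Sticking

namespace Sticking

lemma hker_contOn {α : ℝ} (hα0 : 0 < α) (hα2 : α < 1/2) :
    ContinuousOn (hker α) (Icc 0 Real.pi) := by
  intro x hx
  rcases eq_or_lt_of_le hx.1 with h | hpos
  · -- x = 0
    subst h
    have h0 : hker α 0 = 0 := by
      unfold hker
      simp
    rw [ContinuousWithinAt, h0]
    have hbound : ∀ᶠ y in 𝓝[Icc 0 Real.pi] (0:ℝ), ‖hker α y‖ ≤ y ^ (1 - 2*α) := by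
      filter_upwards [self_mem_nhdsWithin] with y hy
      rcases eq_or_lt_of_le hy.1 with h | hypos
      · subst h
        simp [hker, Real.zero_rpow (by linarith : (1:ℝ) - 2*α ≠ 0)]
      · rw [hker_eq_on α hy.1 hy.2, Real.norm_eq_abs, abs_div,
          abs_of_nonneg (Real.rpow_nonneg hy.1 _),
          Real.rpow_sub hypos, Real.rpow_one]
        rw [div_le_div_iff_of_pos_right (Real.rpow_pos_of_pos hypos _)]
        calc |Real.sin y| ≤ |y| := Real.abs_sin_le_abs
          _ = y := abs_of_nonneg hy.1
    have hg : Tendsto (fun y : ℝ => y ^ (1 - 2*α)) (𝓝[Icc 0 Real.pi] (0:ℝ))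
        (𝓝 ((0:ℝ) ^ (1 - 2*α))) :=
      (Real.continuousAt_rpow_const 0 (1 - 2*α) (Or.inr (by linarith))).continuousWithinAt
    rw [Real.zero_rpow (by linarith : (1:ℝ) - 2*α ≠ 0)] at hg
    exact squeeze_zero_norm' hbound hg
  · -- x > 0
    have hcw : ContinuousWithinAt (fun y => Real.sin y / y ^ (2*α)) (Icc 0 Real.pi) x := by
      apply ContinuousAt.continuousWithinAt
      exact (Real.continuous_sin.continuousAt).div
        (Real.continuousAt_rpow_const x (2*α) (Or.inl (ne_of_gt hpos)))
        (ne_of_gt (Real.rpow_pos_of_pos hpos _))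
    apply hcw.congr
    · intro y hy
      exact hker_eq_on α hy.1 hy.2
    · exact hker_eq_on α hx.1 hx.2

lemma hker_hasDerivAt {α x : ℝ} (hx0 : 0 < x) (hxπ : x < Real.pi) :
    HasDerivAt (hker α)
      (Real.cos x * x ^ (-(2*α)) + Real.sin x * (-(2*α) * x ^ (-(2*α) - 1))) x := by
  have h1 : HasDerivAt (fun y : ℝ => Real.sin y * y ^ (-(2*α)))
      (Real.cos x * x ^ (-(2*α)) + Real.sin x * (-(2*α) * x ^ (-(2*α) - 1))) x :=
    (Real.hasDerivAt_sin x).mul (Real.hasDerivAt_rpow_const (Or.inl (ne_of_gt hx0)))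
  apply h1.congr_of_eventuallyEq
  filter_upwards [Ioo_mem_nhds hx0 hxπ] with y hy
  rw [hker_eq_on α hy.1.le hy.2.le, Real.rpow_neg hy.1.le, div_eq_mul_inv]

lemma deriv_lower {α x : ℝ} (hα0 : 0 < α) (hα2 : α < 1/2) (hx0 : 0 < x) (hxπ : x < Real.pi) :
    -(Lco α) ≤ Real.cos x * x ^ (-(2*α)) + Real.sin x * (-(2*α) * x ^ (-(2*α) - 1)) := by
  have hfac : Real.cos x * x ^ (-(2*α)) + Real.sin x * (-(2*α) * x ^ (-(2*α) - 1))
      = (x * Real.cos x - 2*α * Real.sin x) * x ^ (-(2*α) - 1) := by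
    have hx : x ^ (-(2*α)) = x * x ^ (-(2*α) - 1) := by
      have h := Real.rpow_add hx0 1 (-(2*α) - 1)
      rw [Real.rpow_one] at h
      rw [show (1 + (-(2*α) - 1) : ℝ) = -(2*α) by ring] at h
      exact h
    rw [hx]
    ring
  rw [hfac]
  have hppos : 0 < x ^ (-(2*α) - 1) := Real.rpow_pos_of_pos hx0 _
  rcases le_or_gt x (del α) with hle | hgt
  · -- numerator nonneg
    have h1 : Real.sin x ≤ x := Real.sin_le hx0.le
    have h2 : 1 - x^2/2 ≤ Real.cos x := Real.one_sub_sq_div_two_le_cos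
    have hx2 : x^2 ≤ 2 * (1 - 2*α) := by
      calc x^2 ≤ (del α)^2 := pow_le_pow_left₀ hx0.le hle 2
        _ ≤ _ := del_sq hα2
    have hnum : 0 ≤ x * Real.cos x - 2*α * Real.sin x := by
      nlinarith [mul_le_mul_of_nonneg_left h2 hx0.le,
        mul_le_mul_of_nonneg_left h1 (by linarith : (0:ℝ) ≤ 2*α),
        mul_nonneg hx0.le (show (0:ℝ) ≤ 1 - 2*α - x^2/2 by linarith)]
    have : 0 ≤ (x * Real.cos x - 2*α * Real.sin x) * x ^ (-(2*α) - 1) :=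
      mul_nonneg hnum hppos.le
    linarith [Lco_nonneg hα2]
  · -- away from 0
    have hnum : -(Real.pi + 1) ≤ x * Real.cos x - 2*α * Real.sin x := by
      have h1 : -1 ≤ Real.cos x := Real.neg_one_le_cos x
      have h2 : Real.sin x ≤ 1 := Real.sin_le_one x
      nlinarith [mul_le_mul_of_nonneg_left h1 hx0.le,
        mul_le_mul_of_nonneg_left h2 (by linarith : (0:ℝ) ≤ 2*α)]
    have hdel := del_pos hα2
    have hpb : x ^ (-(2*α) - 1) ≤ ((del α)^3)⁻¹ := by
      have e1 : x ^ (-(2*α) - 1) = (x ^ (2*α + 1))⁻¹ := by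
        rw [show (-(2*α) - 1 : ℝ) = -(2*α + 1) by ring, Real.rpow_neg hx0.le]
      rw [e1]
      have h3 : (del α : ℝ) ^ ((3:ℕ) : ℝ) ≤ (del α) ^ (2*α + 1) := by
        apply Real.rpow_le_rpow_of_exponent_ge hdel (del_le_one α)
        push_cast
        linarith
      rw [Real.rpow_natCast] at h3
      have h4 : (del α) ^ (2*α + 1) ≤ x ^ (2*α + 1) :=
        Real.rpow_le_rpow hdel.le hgt.le (by linarith)
      have h5 : (0:ℝ) < (del α)^3 := by positivity
      exact inv_anti₀ h5 (h3.trans h4)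
    have hLeq : -(Lco α) = -(Real.pi + 1) * ((del α)^3)⁻¹ := by
      unfold Lco
      field_simp
    rw [hLeq]
    calc -(Real.pi + 1) * ((del α)^3)⁻¹ ≤ -(Real.pi + 1) * x ^ (-(2*α) - 1) := by
          apply mul_le_mul_of_nonpos_left hpb
          linarith [Real.pi_pos]
      _ ≤ (x * Real.cos x - 2*α * Real.sin x) * x ^ (-(2*α) - 1) :=
          mul_le_mul_of_nonneg_right hnum hppos.le

lemma mono1 {α : ℝ} (hα0 : 0 < α) (hα2 : α < 1/2) :
    MonotoneOn (fun x => hker α x + Lco α * x) (Icc 0 Real.pi) := by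
  have hder : ∀ x ∈ Ioo (0:ℝ) Real.pi,
      HasDerivAt (fun x => hker α x + Lco α * x)
        ((Real.cos x * x ^ (-(2*α)) + Real.sin x * (-(2*α) * x ^ (-(2*α) - 1))) + Lco α) x := by
    intro x hx
    have h2 : HasDerivAt (fun y : ℝ => Lco α * y) (Lco α) x := by
      simpa using (hasDerivAt_id x).const_mul (Lco α)
    exact (hker_hasDerivAt hx.1 hx.2).add h2
  apply monotoneOn_of_deriv_nonneg (convex_Icc _ _)
  · exact (hker_contOn hα0 hα2).add (continuous_const.mul continuous_id).continuousOn
  · intro x hx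
    rw [interior_Icc] at hx
    exact (hder x hx).differentiableAt.differentiableWithinAt
  · intro x hx
    rw [interior_Icc] at hx
    rw [(hder x hx).deriv]
    linarith [deriv_lower hα0 hα2 hx.1 hx.2]

end Sticking

namespace Sticking

/-- `F a ≤ F b` for `-π ≤ a ≤ b ≤ 0`, where `F x = hker α x + Lco α * x`. -/
lemma mono2 {α : ℝ} (hα0 : 0 < α) (hα2 : α < 1/2) {a b : ℝ}
    (ha : -Real.pi ≤ a) (hab : a ≤ b) (hb : b ≤ 0) :
    hker α a + Lco α * a ≤ hker α b + Lco α * b := by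
  have hπ := Real.pi_pos
  have h := mono1 hα0 hα2 (show -b ∈ Icc 0 Real.pi from ⟨by linarith, by linarith⟩)
    (show -a ∈ Icc 0 Real.pi from ⟨by linarith, by linarith⟩) (by linarith)
  simp only [hker_neg] at h
  linarith

/-- `F a ≤ F b` for `-2π ≤ a ≤ b ≤ -π`. -/
lemma mono3 {α : ℝ} (hα0 : 0 < α) (hα2 : α < 1/2) {a b : ℝ}
    (ha : -(2*Real.pi) ≤ a) (hab : a ≤ b) (hb : b ≤ -Real.pi) :
    hker α a + Lco α * a ≤ hker α b + Lco α * b := by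
  have hpa : hker α a = hker α (a + 2*Real.pi) := by
    rw [show a = (a + 2*Real.pi) - 2*Real.pi*((1:ℤ):ℝ) by push_cast; ring, hker_sub_int]
    ring_nf
  have hpb : hker α b = hker α (b + 2*Real.pi) := by
    rw [show b = (b + 2*Real.pi) - 2*Real.pi*((1:ℤ):ℝ) by push_cast; ring, hker_sub_int]
    ring_nf
  rw [hpa, hpb]
  have hπ := Real.pi_pos
  have h := mono1 hα0 hα2 (show a + 2*Real.pi ∈ Icc 0 Real.pi from ⟨by linarith, by linarith⟩)
    (show b + 2*Real.pi ∈ Icc 0 Real.pi from ⟨by linarith, by linarith⟩) (by linarith)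
  dsimp only at h
  linarith

/-- `F` is monotone on all of `[-2π, π]`. -/
lemma monoF {α : ℝ} (hα0 : 0 < α) (hα2 : α < 1/2) {a b : ℝ}
    (ha : -(2*Real.pi) ≤ a) (hab : a ≤ b) (hb : b ≤ Real.pi) :
    hker α a + Lco α * a ≤ hker α b + Lco α * b := by
  have hπ := Real.pi_pos
  have m1 : ∀ {u v : ℝ}, 0 ≤ u → u ≤ v → v ≤ Real.pi →
      hker α u + Lco α * u ≤ hker α v + Lco α * v := fun {u v} hu huv hv =>
    mono1 hα0 hα2 (show u ∈ Icc 0 Real.pi from ⟨hu, by linarith⟩)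
      (show v ∈ Icc 0 Real.pi from ⟨by linarith, hv⟩) huv
  rcases le_or_gt b (-Real.pi) with hb1 | hb1
  · exact mono3 hα0 hα2 ha hab hb1
  rcases le_or_gt b 0 with hb2 | hb2
  · rcases le_or_gt (-Real.pi) a with ha1 | ha1
    · exact mono2 hα0 hα2 ha1 hab hb2
    · calc hker α a + Lco α * a ≤ hker α (-Real.pi) + Lco α * (-Real.pi) :=
            mono3 hα0 hα2 ha ha1.le le_rfl
        _ ≤ _ := mono2 hα0 hα2 le_rfl (by linarith) hb2
  · rcases le_or_gt 0 a with ha0 | ha0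
    · exact m1 ha0 hab hb
    rcases le_or_gt (-Real.pi) a with ha1 | ha1
    · calc hker α a + Lco α * a ≤ hker α 0 + Lco α * 0 :=
            mono2 hα0 hα2 ha1 ha0.le le_rfl
        _ ≤ _ := m1 le_rfl hb2.le hb
    · calc hker α a + Lco α * a ≤ hker α (-Real.pi) + Lco α * (-Real.pi) :=
            mono3 hα0 hα2 ha ha1.le le_rfl
        _ ≤ hker α 0 + Lco α * 0 := mono2 hα0 hα2 le_rfl (by linarith) le_rfl
        _ ≤ _ := m1 le_rfl hb2.le hb

/-- One-sided Lipschitz estimate for the kernel. -/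
lemma key {α : ℝ} (hα0 : 0 < α) (hα2 : α < 1/2) (x : ℝ) {ψ : ℝ}
    (hψ0 : 0 ≤ ψ) (hψπ : ψ ≤ Real.pi) :
    hker α (x - ψ) - hker α x ≤ Lco α * ψ := by
  set n : ℤ := round (x / (2*Real.pi)) with hn
  set y : ℝ := x - 2*Real.pi*n with hy
  have hxy : |y| ≤ Real.pi := by
    have h1 : |x / (2*Real.pi) - n| ≤ 1/2 := abs_sub_round _
    have h2 : y = (2*Real.pi) * (x / (2*Real.pi) - n) := by
      rw [hy]
      field_simp
    rw [h2, abs_mul, abs_of_pos two_pi_pos]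
    nlinarith [Real.pi_pos]
  have e1 : hker α (x - ψ) = hker α (y - ψ) := by
    rw [show y - ψ = (x - ψ) - 2*Real.pi*n by rw [hy]; ring, hker_sub_int]
  have e2 : hker α x = hker α y := (hker_sub_int α x n).symm
  rw [e1, e2]
  have habs := abs_le.1 hxy
  have h := monoF hα0 hα2 (a := y - ψ) (b := y)
    (by linarith [habs.1]) (by linarith) habs.2
  linarith

/-- The master pointwise inequality. -/
lemma claimA {α : ℝ} (hα0 : 0 < α) (hα2 : α < 1/2) (x φ : ℝ) :
    Real.sin φ * (hker α (x - φ) - hker α x) ≤ Cco α * (1 - Real.cos φ) := by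
  have hπ := Real.pi_pos
  -- first, the case `0 ≤ φ ≤ π`
  have A0 : ∀ (y : ℝ) {ψ : ℝ}, 0 ≤ ψ → ψ ≤ Real.pi →
      Real.sin ψ * (hker α (y - ψ) - hker α y) ≤ Cco α * (1 - Real.cos ψ) := by
    intro y ψ hψ0 hψπ
    have hb := key hα0 hα2 y hψ0 hψπ
    have hs0 : 0 ≤ Real.sin ψ := Real.sin_nonneg_of_nonneg_of_le_pi hψ0 hψπ
    have hL := Lco_nonneg hα2
    have hsq : ψ^2 ≤ Real.pi^2/2 * (1 - Real.cos ψ) := by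
      have h1 : Real.cos ψ = 1 - 2*Real.sin (ψ/2)^2 := by
        have h2 := Real.cos_two_mul (ψ/2)
        rw [show 2*(ψ/2) = ψ by ring] at h2
        have h3 := Real.sin_sq_add_cos_sq (ψ/2)
        linarith
      have hJ : 2/Real.pi * (ψ/2) ≤ Real.sin (ψ/2) :=
        Real.mul_le_sin (by linarith) (by linarith)
      have h4 : (ψ/Real.pi)^2 ≤ Real.sin (ψ/2)^2 := by
        apply pow_le_pow_left₀ (by positivity)
        calc ψ/Real.pi = 2/Real.pi * (ψ/2) := by ring
          _ ≤ _ := hJ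
      rw [h1]
      have h5 : (ψ/Real.pi)^2 = ψ^2/Real.pi^2 := by ring
      rw [h5] at h4
      have h6 : ψ^2 ≤ Real.pi^2 * Real.sin (ψ/2)^2 := by
        rw [div_le_iff₀ (by positivity)] at h4
        linarith [h4]
      nlinarith
    calc Real.sin ψ * (hker α (y - ψ) - hker α y) ≤ Real.sin ψ * (Lco α * ψ) :=
          mul_le_mul_of_nonneg_left hb hs0
      _ ≤ ψ * (Lco α * ψ) :=
          mul_le_mul_of_nonneg_right (Real.sin_le hψ0) (by positivity)
      _ = Lco α * ψ^2 := by ring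
      _ ≤ Lco α * (Real.pi^2/2 * (1 - Real.cos ψ)) := mul_le_mul_of_nonneg_left hsq hL
      _ = Cco α * (1 - Real.cos ψ) := by unfold Cco; ring
  -- reduce general φ
  set n : ℤ := round (φ / (2*Real.pi)) with hn
  set ψ : ℝ := φ - 2*Real.pi*n with hψ
  have hψabs : |ψ| ≤ Real.pi := by
    have h1 : |φ / (2*Real.pi) - n| ≤ 1/2 := abs_sub_round _
    have h2 : ψ = (2*Real.pi) * (φ / (2*Real.pi) - n) := by
      rw [hψ]
      field_simp
    rw [h2, abs_mul, abs_of_pos two_pi_pos]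
    nlinarith
  have hφψ : φ = ψ + n * (2*Real.pi) := by rw [hψ]; ring
  have hsin : Real.sin φ = Real.sin ψ := by rw [hφψ, Real.sin_add_int_mul_two_pi]
  have hcos : Real.cos φ = Real.cos ψ := by rw [hφψ, Real.cos_add_int_mul_two_pi]
  set y : ℝ := x - 2*Real.pi*n with hy
  have e1 : hker α (x - φ) = hker α (y - ψ) := by
    congr 1
    rw [hy, hψ]
    ring
  have e2 : hker α x = hker α y := (hker_sub_int α x n).symm
  rw [hsin, hcos, e1, e2]
  have habs := abs_le.1 hψabs
  rcases le_or_gt 0 ψ with h0 | h0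
  · exact A0 y h0 habs.2
  · have hψ' : 0 ≤ -ψ := by linarith
    have h := A0 (y + -ψ) hψ' (by linarith [habs.1])
    rw [show y + -ψ - -ψ = y by ring] at h
    rw [Real.sin_neg, Real.cos_neg] at h
    rw [show y - ψ = y + -ψ by ring]
    linarith

end Sticking

/-- A global classical solution of the singular weighted Kuramoto system on `[0, ∞)`:
`θ̇_i = Ω_i + (K/N) ∑_j h(θ_j − θ_i)` at every `t ≥ 0`. -/
def IsKuramotoSol (N : ℕ) (K α : ℝ) (Ω : Fin N → ℝ)
    (Θ : ℝ → EuclideanSpace ℝ (Fin N)) : Prop :=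
  ∀ t ∈ Set.Ici (0 : ℝ), ∀ i, HasDerivWithinAt (fun s => Θ s i)
    (Ω i + (K / (N : ℝ)) * ∑ j, hker α (Θ t j - Θ t i)) (Set.Ici (0 : ℝ)) t

open Sticking

/-- for `α ∈ (0, 1/2)`, if two oscillators collide at time `t*`, then they stick
together from `t*` on if and only if their natural frequencies agree. -/
theorem statement3 (N : ℕ) (K α : ℝ) (hK : 0 < K) (hα : α ∈ Ioo (0 : ℝ) (1 / 2))
    (Ω : Fin N → ℝ) (Θ : ℝ → EuclideanSpace ℝ (Fin N))
    (hsol : IsKuramotoSol N K α Ω Θ)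
    (tstar : ℝ) (htstar : 0 ≤ tstar) (i j : Fin N) (hij : i ≠ j)
    (hcol : ∃ m : ℤ, Θ tstar i - Θ tstar j = 2 * Real.pi * m) :
    (∀ s ∈ Ici tstar, ∃ m : ℤ, Θ s i - Θ s j = 2 * Real.pi * m) ↔ Ω i = Ω j := by
  obtain ⟨hα0, hα2⟩ := hα
  have hα2' : α < 1/2 := hα2
  have hπ := Real.pi_pos
  have hNpos : (0:ℝ) < (N:ℝ) := by exact_mod_cast i.pos
  set φ : ℝ → ℝ := fun s => Θ s i - Θ s j with hφdef
  have hφderiv : ∀ t ∈ Set.Ici (0:ℝ), HasDerivWithinAt φ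
      ((Ω i - Ω j) + (K/(N:ℝ)) *
        ((∑ k, hker α (Θ t k - Θ t i)) - ∑ k, hker α (Θ t k - Θ t j)))
      (Set.Ici 0) t := by
    intro t ht
    have h : HasDerivWithinAt φ _ (Set.Ici 0) t := (hsol t ht i).sub (hsol t ht j)
    convert h using 1
    ring
  have hcont : ContinuousOn φ (Set.Ici 0) := fun t ht => (hφderiv t ht).continuousWithinAt
  constructor
  · -- sticking implies equal frequencies
    intro hstick
    obtain ⟨m₀, hm₀⟩ := hcol
    have hφt : φ tstar = 2*Real.pi*(m₀:ℝ) := hm₀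
    have hconst : ∀ s ∈ Set.Ici tstar, φ s = 2*Real.pi*(m₀:ℝ) := by
      intro s hs
      obtain ⟨m₁, hm₁⟩ := hstick s hs
      have hφs : φ s = 2*Real.pi*(m₁:ℝ) := hm₁
      rw [hφs]
      by_contra hne
      have hm01 : m₁ ≠ m₀ := fun h => hne (by rw [h])
      have hcont' : ContinuousOn φ (Set.Icc tstar s) :=
        hcont.mono (fun t ht => le_trans htstar ht.1)
      rcases lt_or_gt_of_ne hm01 with hlt | hgt
      · -- m₁ < m₀
        have hm₁le : (m₁:ℝ) ≤ (m₀:ℝ) - 1 := by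
          have : m₁ ≤ m₀ - 1 := by omega
          exact_mod_cast this
        have hv : 2*Real.pi*(m₀:ℝ) - Real.pi ∈ Set.Icc (φ s) (φ tstar) := by
          rw [hφs, hφt]
          constructor
          · nlinarith
          · linarith
        obtain ⟨t', ht'mem, hφt'⟩ := intermediate_value_Icc' hs hcont' hv
        obtain ⟨m₂, hm₂⟩ := hstick t' ht'mem.1
        have heq : Real.pi * (2*(m₂:ℝ)) = Real.pi * (2*(m₀:ℝ) - 1) := by
          have h1 : φ t' = 2*Real.pi*(m₂:ℝ) := hm₂
          rw [hφt'] at h1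
          linarith
        have h3 := mul_left_cancel₀ Real.pi_ne_zero heq
        have h4 : (2*m₂ : ℤ) = 2*m₀ - 1 := by exact_mod_cast h3
        omega
      · -- m₀ < m₁
        have hm₁ge : (m₀:ℝ) + 1 ≤ (m₁:ℝ) := by
          have : m₀ + 1 ≤ m₁ := by omega
          exact_mod_cast this
        have hv : 2*Real.pi*(m₀:ℝ) + Real.pi ∈ Set.Icc (φ tstar) (φ s) := by
          rw [hφt, hφs]
          constructor
          · linarith
          · nlinarith
        obtain ⟨t', ht'mem, hφt'⟩ := intermediate_value_Icc hs hcont' hv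
        obtain ⟨m₂, hm₂⟩ := hstick t' ht'mem.1
        have heq : Real.pi * (2*(m₂:ℝ)) = Real.pi * (2*(m₀:ℝ) + 1) := by
          have h1 : φ t' = 2*Real.pi*(m₂:ℝ) := hm₂
          rw [hφt'] at h1
          linarith
        have h3 := mul_left_cancel₀ Real.pi_ne_zero heq
        have h4 : (2*m₂ : ℤ) = 2*m₀ + 1 := by exact_mod_cast h3
        omega
    set t₀ : ℝ := tstar + 1 with ht₀def
    have ht₀0 : (0:ℝ) < t₀ := by rw [ht₀def]; linarith
    have hD : HasDerivAt φ
        ((Ω i - Ω j) + (K/(N:ℝ)) *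
          ((∑ k, hker α (Θ t₀ k - Θ t₀ i)) - ∑ k, hker α (Θ t₀ k - Θ t₀ j))) t₀ :=
      (hφderiv t₀ ht₀0.le).hasDerivAt (Ici_mem_nhds ht₀0)
    have hD0 : HasDerivAt φ 0 t₀ := by
      apply HasDerivAt.congr_of_eventuallyEq (hasDerivAt_const t₀ (2*Real.pi*(m₀:ℝ)))
      filter_upwards [Ici_mem_nhds (show tstar < t₀ by rw [ht₀def]; linarith)] with y hy
      exact hconst y hy
    have huniq := hD.unique hD0
    have hφt₀ : Θ t₀ i - Θ t₀ j = 2*Real.pi*(m₀:ℝ) := hconst t₀ (by rw [ht₀def]; simp)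
    have hsum : (∑ k, hker α (Θ t₀ k - Θ t₀ i)) = ∑ k, hker α (Θ t₀ k - Θ t₀ j) := by
      apply Finset.sum_congr rfl
      intro k _
      rw [show Θ t₀ k - Θ t₀ i = (Θ t₀ k - Θ t₀ j) - 2*Real.pi*((m₀:ℤ):ℝ) by
        push_cast; linarith, hker_sub_int]
    rw [hsum, sub_self, mul_zero, add_zero] at huniq
    linarith
  · -- equal frequencies imply sticking
    intro hΩ s hs
    set c : ℝ := K * Cco α with hc
    set V : ℝ → ℝ := fun t => 1 - Real.cos (φ t) with hVdef
    have hVd : ∀ t ∈ Set.Ici (0:ℝ), HasDerivWithinAt V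
        (Real.sin (φ t) * ((Ω i - Ω j) + (K/(N:ℝ)) *
          ((∑ k, hker α (Θ t k - Θ t i)) - ∑ k, hker α (Θ t k - Θ t j))))
        (Set.Ici 0) t := by
      intro t ht
      have h := (hφderiv t ht).cos
      have h2 : HasDerivWithinAt V _ (Set.Ici (0:ℝ)) t :=
        (hasDerivWithinAt_const t (Set.Ici (0:ℝ)) (1:ℝ)).sub h
      convert h2 using 1
      ring
    have hbound : ∀ t, 0 ≤ t →
        Real.sin (φ t) * ((Ω i - Ω j) + (K/(N:ℝ)) *
          ((∑ k, hker α (Θ t k - Θ t i)) - ∑ k, hker α (Θ t k - Θ t j))) ≤ c * V t := by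
      intro t ht
      rw [hΩ, sub_self, zero_add]
      have hsd : (∑ k, hker α (Θ t k - Θ t i)) - ∑ k, hker α (Θ t k - Θ t j)
          = ∑ k, (hker α ((Θ t k - Θ t j) - φ t) - hker α (Θ t k - Θ t j)) := by
        rw [← Finset.sum_sub_distrib]
        apply Finset.sum_congr rfl
        intro k _
        congr 2
        rw [hφdef]
        ring
      rw [hsd]
      have h1 : Real.sin (φ t) * ((K/(N:ℝ)) *
            ∑ k, (hker α ((Θ t k - Θ t j) - φ t) - hker α (Θ t k - Θ t j)))
          = (K/(N:ℝ)) * ∑ k, Real.sin (φ t) *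
            (hker α ((Θ t k - Θ t j) - φ t) - hker α (Θ t k - Θ t j)) := by
        simp only [Finset.mul_sum]
        apply Finset.sum_congr rfl
        intro k _
        ring
      rw [h1]
      have h2 : (∑ k, Real.sin (φ t) *
            (hker α ((Θ t k - Θ t j) - φ t) - hker α (Θ t k - Θ t j)))
          ≤ ∑ _k : Fin N, Cco α * V t :=
        Finset.sum_le_sum (fun k _ => claimA hα0 hα2' (Θ t k - Θ t j) (φ t))
      have h3 : (∑ _k : Fin N, Cco α * V t) = (N:ℝ) * (Cco α * V t) := by
        rw [Finset.sum_const, Finset.card_univ, Fintype.card_fin, nsmul_eq_mul]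
      have hKN : 0 ≤ K/(N:ℝ) := by positivity
      calc (K/(N:ℝ)) * ∑ k, Real.sin (φ t) *
            (hker α ((Θ t k - Θ t j) - φ t) - hker α (Θ t k - Θ t j))
          ≤ (K/(N:ℝ)) * ((N:ℝ) * (Cco α * V t)) :=
            mul_le_mul_of_nonneg_left (h2.trans_eq h3) hKN
        _ = c * V t := by rw [hc]; field_simp
    have hVnn : ∀ t, 0 ≤ V t := by
      intro t
      rw [hVdef]
      simp only
      linarith [Real.cos_le_one (φ t)]
    set G : ℝ → ℝ := fun t => V t * Real.exp (-c * t) with hGdef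
    have hGd : ∀ t ∈ Set.Ici (0:ℝ), HasDerivWithinAt G
        ((Real.sin (φ t) * ((Ω i - Ω j) + (K/(N:ℝ)) *
          ((∑ k, hker α (Θ t k - Θ t i)) - ∑ k, hker α (Θ t k - Θ t j)))) *
            Real.exp (-c * t)
          + V t * (Real.exp (-c * t) * (-c))) (Set.Ici 0) t := by
      intro t ht
      have h0 : HasDerivAt (fun t : ℝ => -c * t) (-c) t := by
        simpa using (hasDerivAt_id t).const_mul (-c)
      exact (hVd t ht).mul h0.exp.hasDerivWithinAt
    have hanti : AntitoneOn G (Set.Ici tstar) := by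
      apply antitoneOn_of_deriv_nonpos (convex_Ici _)
      · intro t ht
        exact ((hGd t (le_trans htstar ht)).continuousWithinAt).mono
          (Ici_subset_Ici.2 htstar)
      · intro t ht
        rw [interior_Ici] at ht
        have h0t : (0:ℝ) < t := lt_of_le_of_lt htstar ht
        exact ((hGd t h0t.le).hasDerivAt
          (Ici_mem_nhds h0t)).differentiableAt.differentiableWithinAt
      · intro t ht
        rw [interior_Ici] at ht
        have h0t : (0:ℝ) < t := lt_of_le_of_lt htstar ht
        have hd := (hGd t h0t.le).hasDerivAt (Ici_mem_nhds h0t)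
        rw [hd.deriv]
        have hb := hbound t h0t.le
        have hexp : (0:ℝ) < Real.exp (-c * t) := Real.exp_pos _
        nlinarith [mul_le_mul_of_nonneg_right hb hexp.le]
    have hV0 : V tstar = 0 := by
      obtain ⟨m, hm⟩ := hcol
      have hφtt : φ tstar = (m:ℝ) * (2*Real.pi) := by
        have : φ tstar = 2*Real.pi*(m:ℝ) := hm
        linarith
      rw [hVdef]
      simp only
      rw [hφtt, Real.cos_int_mul_two_pi]
      ring
    have hGs : G s ≤ G tstar := hanti self_mem_Ici hs hs
    have hGt : G tstar = 0 := by
      rw [hGdef]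
      simp only
      rw [hV0, zero_mul]
    have hVs : V s ≤ 0 := by
      rw [hGt] at hGs
      have hexp : (0:ℝ) < Real.exp (-c * s) := Real.exp_pos _
      by_contra hcon
      push_neg at hcon
      have : (0:ℝ) < V s * Real.exp (-c * s) := mul_pos hcon hexp
      have hGseq : G s = V s * Real.exp (-c * s) := by rw [hGdef]
      linarith [hGseq ▸ hGs]
    have hcos1 : Real.cos (φ s) = 1 := by
      have hVeq : V s = 0 := le_antisymm hVs (hVnn s)
      rw [hVdef] at hVeq
      simp only at hVeq
      linarith
    obtain ⟨n, hn⟩ := (Real.cos_eq_one_iff (φ s)).1 hcos1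
    refine ⟨n, ?_⟩
    have hφs : φ s = Θ s i - Θ s j := rfl
    linarith [hn, hφs]
end

section
/- Let α ∈ (0, 1/2), K > 0 and Ω_i = 0 for all i = 1, …, N (identical oscillators). Let Θ : [0, ∞) → ℝ^N be a global classical solution of the singular weighted Kuramoto system whose initial configuration is confined in a half circle: 0 < D(Θ(0)) < π. Then D(Θ(t))^{2α} ≤ D(Θ(0))^{2α} − 2αK·(sin D(Θ(0))/D(Θ(0)))·t for all t ≥ 0 for which the right-hand side is nonnegative, and there is complete phase synchronization in finite time: θ_i(t) = θ_j(t) for all i, j and all t ≥ T_c, where T_c = D(Θ(0))/(2αK·h(D(Θ(0)))) = D(Θ(0))^{2α+1}/(2αK·sin D(Θ(0))). -/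
open Real Set Filter Topology MeasureTheory

/-- The phase diameter `D(Θ) = max_i θ_i − min_i θ_i`. -/
noncomputable def diamN (N : ℕ) (Θ : EuclideanSpace ℝ (Fin N)) : ℝ :=
  (⨆ i, Θ i) - (⨅ i, Θ i)

-- orthoDist equals |θ| in the half circle
lemma orthoDist_eq_abs {θ : ℝ} (h : |θ| < Real.pi) : orthoDist θ = |θ| := by
  have hpi := Real.pi_pos
  have habs := abs_lt.1 h
  have h0 : round (θ / (2 * Real.pi)) = 0 := by
    rw [round_eq_zero_iff, Set.mem_Ico, le_div_iff₀ (by positivity), div_lt_iff₀ (by positivity)]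
    constructor <;> nlinarith [habs.1, habs.2]
  unfold orthoDist
  rw [h0]
  norm_num

lemma hker_eq {α θ : ℝ} (h : |θ| < Real.pi) : hker α θ = Real.sin θ / |θ| ^ (2 * α) := by
  unfold hker; rw [orthoDist_eq_abs h]

-- concavity: sin D / D ≤ sin d / d for 0 < d ≤ D < π
lemma sin_div_mono {d D : ℝ} (hd : 0 < d) (hdD : d ≤ D) (hD : D < Real.pi) :
    Real.sin D / D ≤ Real.sin d / d := by
  have hD0 : 0 < D := lt_of_lt_of_le hd hdD
  have key : (d / D) * Real.sin D ≤ Real.sin d := by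
    have hc := strictConcaveOn_sin_Icc.concaveOn
    have h1 : D ∈ Set.Icc (0:ℝ) Real.pi := ⟨hD0.le, hD.le⟩
    have h2 : (0:ℝ) ∈ Set.Icc (0:ℝ) Real.pi := ⟨le_rfl, Real.pi_pos.le⟩
    have ha : (0:ℝ) ≤ d / D := by positivity
    have hb : (0:ℝ) ≤ 1 - d / D := by
      have : d / D ≤ 1 := (div_le_one hD0).2 hdD
      linarith
    have hab : d / D + (1 - d / D) = 1 := by ring
    have := hc.2 h1 h2 ha hb hab
    have he : (d / D) • D + (1 - d / D) • (0:ℝ) = d := by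
      rw [smul_eq_mul, smul_eq_mul, mul_zero, add_zero, div_mul_cancel₀ d hD0.ne']
    rw [he] at this
    simpa [Real.sin_zero] using this
  rw [div_le_div_iff₀ hD0 hd]
  have : (d / D) * Real.sin D * D ≤ Real.sin d * D := by nlinarith
  have hdd : (d / D) * Real.sin D * D = Real.sin D * d := by field_simp
  linarith [hdd ▸ this]

-- key splitting inequality
lemma kernel_split {α a b : ℝ} (hα : 0 < α) (ha : 0 ≤ a) (hb : 0 ≤ b)
    (hab : a + b < Real.pi) :
    Real.sin (a + b) / (a + b) ^ (2 * α) ≤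
      Real.sin a / a ^ (2 * α) + Real.sin b / b ^ (2 * α) := by
  rcases eq_or_lt_of_le ha with ha0 | ha0
  · simp [← ha0]
  rcases eq_or_lt_of_le hb with hb0 | hb0
  · simp [← hb0]
  have hD : 0 < a + b := by linarith
  have hsa : 0 ≤ Real.sin a := Real.sin_nonneg_of_nonneg_of_le_pi ha (by linarith)
  have hsb : 0 ≤ Real.sin b := Real.sin_nonneg_of_nonneg_of_le_pi hb (by linarith)
  have hpa : (0:ℝ) < a ^ (2*α) := Real.rpow_pos_of_pos ha0 _
  have hpb : (0:ℝ) < b ^ (2*α) := Real.rpow_pos_of_pos hb0 _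
  have hpD : (0:ℝ) < (a+b) ^ (2*α) := Real.rpow_pos_of_pos hD _
  have h1 : a ^ (2*α) ≤ (a+b) ^ (2*α) := Real.rpow_le_rpow ha (by linarith) (by positivity)
  have h2 : b ^ (2*α) ≤ (a+b) ^ (2*α) := Real.rpow_le_rpow hb (by linarith) (by positivity)
  have hsum : Real.sin (a + b) ≤ Real.sin a + Real.sin b := by
    rw [Real.sin_add]
    nlinarith [Real.cos_le_one a, Real.cos_le_one b]
  calc Real.sin (a+b) / (a+b) ^ (2*α) ≤ (Real.sin a + Real.sin b) / (a+b)^(2*α) := by gcongr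
    _ = Real.sin a / (a+b)^(2*α) + Real.sin b / (a+b)^(2*α) := by ring
    _ ≤ Real.sin a / a ^ (2*α) + Real.sin b / b ^ (2*α) := by gcongr

-- per-pair derivative estimate
lemma pair_deriv_le {N : ℕ} {K α : ℝ} (hK : 0 < K) (hα : 0 < α)
    (θ : Fin N → ℝ) (i j : Fin N) (hmax : ∀ k, θ k ≤ θ i) (hmin : ∀ k, θ j ≤ θ k)
    (hD : θ i - θ j < Real.pi) :
    (K / N) * ∑ k, hker α (θ k - θ i) - (K / N) * ∑ k, hker α (θ k - θ j)
      ≤ -(K * (Real.sin (θ i - θ j) / (θ i - θ j) ^ (2 * α))) := by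
  have hN : 0 < N := by
    rcases Nat.eq_zero_or_pos N with h | h
    · exact absurd i.2 (by omega)
    · exact h
  have hD0 : 0 ≤ θ i - θ j := by linarith [hmin i]
  set D := θ i - θ j with hDdef
  have main : ∀ k, hker α (θ k - θ i) - hker α (θ k - θ j)
      ≤ -(Real.sin D / D ^ (2*α)) := by
    intro k
    have hak : 0 ≤ θ i - θ k := by linarith [hmax k]
    have hbk : 0 ≤ θ k - θ j := by linarith [hmin k]
    have habk : (θ i - θ k) + (θ k - θ j) = D := by ring
    have ha_lt : θ i - θ k < Real.pi := by linarith
    have hb_lt : θ k - θ j < Real.pi := by linarith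
    have e1 : hker α (θ k - θ i) = -(Real.sin (θ i - θ k) / (θ i - θ k) ^ (2*α)) := by
      rw [show θ k - θ i = -(θ i - θ k) by ring, hker_eq (by rw [abs_neg, abs_of_nonneg hak]; exact ha_lt),
        Real.sin_neg, abs_neg, abs_of_nonneg hak, neg_div]
    have e2 : hker α (θ k - θ j) = Real.sin (θ k - θ j) / (θ k - θ j) ^ (2*α) := by
      rw [hker_eq (by rw [abs_of_nonneg hbk]; exact hb_lt), abs_of_nonneg hbk]
    rw [e1, e2]
    have := kernel_split hα hak hbk (by rw [habk]; exact hD)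
    rw [habk] at this
    linarith
  have hsum : (∑ k, hker α (θ k - θ i)) - (∑ k, hker α (θ k - θ j))
      ≤ (N : ℝ) * (-(Real.sin D / D ^ (2*α))) := by
    rw [← Finset.sum_sub_distrib]
    calc (∑ k, (hker α (θ k - θ i) - hker α (θ k - θ j)))
        ≤ ∑ _k : Fin N, (-(Real.sin D / D ^ (2*α))) := Finset.sum_le_sum fun k _ => main k
      _ = (N : ℝ) * (-(Real.sin D / D ^ (2*α))) := by
          simp [Finset.sum_const, nsmul_eq_mul]
  have hKN : (0:ℝ) < K / N := by positivity
  have := mul_le_mul_of_nonneg_left hsum hKN.le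
  have hNne : (N:ℝ) ≠ 0 := Nat.cast_ne_zero.2 hN.ne'
  calc (K / N) * ∑ k, hker α (θ k - θ i) - (K / N) * ∑ k, hker α (θ k - θ j)
      = (K / N) * ((∑ k, hker α (θ k - θ i)) - (∑ k, hker α (θ k - θ j))) := by ring
    _ ≤ (K / N) * ((N : ℝ) * (-(Real.sin D / D ^ (2*α)))) := this
    _ = -(K * (Real.sin D / D ^ (2*α))) := by
        rw [← mul_assoc, div_mul_cancel₀ _ hNne]
        ring

-- Dini derivative bound for a finite max of differentiable functions
lemma dini_max {ι : Type*} [Finite ι] {x : ℝ} {g : ι → ℝ → ℝ} {g' : ι → ℝ} {f : ℝ → ℝ}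
    (hg : ∀ i, HasDerivWithinAt (g i) (g' i) (Set.Ici x) x)
    (hfg : ∀ t, ∃ i, f t = g i t) (hle : ∀ t i, g i t ≤ f t)
    {b r : ℝ} (hb : ∀ i, g i x = f x → g' i ≤ b) (hr : b < r) :
    ∃ᶠ z in 𝓝[>] x, slope f x z < r := by
  have key : ∀ i, ∀ᶠ z in 𝓝[>] x, (g i z - f x) / (z - x) < r := by
    intro i
    have hs : Tendsto (slope (g i) x) (𝓝[>] x) (𝓝 (g' i)) := by
      have h := hasDerivWithinAt_iff_tendsto_slope.1 (hg i)
      rwa [Set.Ici_sdiff_left] at h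
    by_cases hi : g i x = f x
    · have h1 : ∀ᶠ z in 𝓝[>] x, slope (g i) x z < r :=
        hs.eventually_lt_const ((hb i hi).trans_lt hr)
      filter_upwards [h1] with z hz
      rwa [slope_def_field, hi] at hz
    · have hlt : g i x < f x := (hle x i).lt_of_ne hi
      have h1 : ∀ᶠ z in 𝓝[>] x, slope (g i) x z < g' i + 1 :=
        hs.eventually_lt_const (lt_add_one _)
      have h2 : Tendsto (fun z => (f x - g i x) * (z - x)⁻¹) (𝓝[>] x) atTop := by
        apply Tendsto.const_mul_atTop (sub_pos.2 hlt)
        apply tendsto_inv_nhdsGT_zero.comp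
        apply tendsto_nhdsWithin_of_tendsto_nhds_of_eventually_within
        · have h0 : Tendsto (fun z : ℝ => z - x) (𝓝 x) (𝓝 (x - x)) :=
            ((continuous_id.sub continuous_const).tendsto x)
          rw [sub_self] at h0
          exact h0.mono_left nhdsWithin_le_nhds
        · filter_upwards [self_mem_nhdsWithin] with z hz
          exact sub_pos.2 (Set.mem_Ioi.1 hz)
      have h3 : ∀ᶠ z in 𝓝[>] x, g' i + 1 - r < (f x - g i x) * (z - x)⁻¹ :=
        h2.eventually_gt_atTop _
      filter_upwards [h1, h3, self_mem_nhdsWithin] with z hz1 hz3 hz'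
      have hzx : (0:ℝ) < z - x := sub_pos.2 hz'
      rw [slope_def_field] at hz1
      have he : (g i z - f x) / (z - x)
          = (g i z - g i x) / (z - x) - (f x - g i x) * (z - x)⁻¹ := by
        field_simp
        ring
      rw [he]
      linarith
  have hall : ∀ᶠ z in 𝓝[>] x, ∀ i, (g i z - f x) / (z - x) < r := eventually_all.2 key
  apply Eventually.frequently
  filter_upwards [hall] with z hz
  obtain ⟨i, hi⟩ := hfg z
  rw [slope_def_field, hi]
  exact hz i

lemma exists_isup {N : ℕ} (hN : 0 < N) (v : EuclideanSpace ℝ (Fin N)) :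
    ∃ i, (⨆ k, v k) = v i ∧ ∀ k, v k ≤ v i := by
  have : Nonempty (Fin N) := ⟨⟨0, hN⟩⟩
  obtain ⟨i, hi⟩ := Finite.exists_max (fun k => v k)
  exact ⟨i, le_antisymm (ciSup_le hi) (le_ciSup (Set.finite_range _).bddAbove i), hi⟩

lemma exists_iinf {N : ℕ} (hN : 0 < N) (v : EuclideanSpace ℝ (Fin N)) :
    ∃ j, (⨅ k, v k) = v j ∧ ∀ k, v j ≤ v k := by
  have : Nonempty (Fin N) := ⟨⟨0, hN⟩⟩
  obtain ⟨j, hj⟩ := Finite.exists_min (fun k => v k)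
  exact ⟨j, le_antisymm (ciInf_le (Set.finite_range _).bddBelow j) (le_ciInf hj), hj⟩

noncomputable def diamN' (N : ℕ) (Θ : EuclideanSpace ℝ (Fin N)) : ℝ :=
  (⨆ i, Θ i) - (⨅ i, Θ i)

lemma diamN'_le {N : ℕ} (hN : 0 < N) (v : EuclideanSpace ℝ (Fin N)) (i j : Fin N) :
    v i - v j ≤ diamN' N v := by
  obtain ⟨a, ha, ha'⟩ := exists_isup hN v
  obtain ⟨b, hb, hb'⟩ := exists_iinf hN v
  unfold diamN'
  rw [ha, hb]
  have := ha' i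
  have := hb' j
  linarith

lemma diamN'_attain {N : ℕ} (hN : 0 < N) (v : EuclideanSpace ℝ (Fin N)) :
    ∃ i j, diamN' N v = v i - v j ∧ (∀ k, v k ≤ v i) ∧ (∀ k, v j ≤ v k) := by
  obtain ⟨a, ha, ha'⟩ := exists_isup hN v
  obtain ⟨b, hb, hb'⟩ := exists_iinf hN v
  exact ⟨a, b, by unfold diamN'; rw [ha, hb], ha', hb'⟩

lemma diamN'_nonneg {N : ℕ} (hN : 0 < N) (v : EuclideanSpace ℝ (Fin N)) :
    0 ≤ diamN' N v := by
  have := diamN'_le hN v ⟨0, hN⟩ ⟨0, hN⟩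
  simpa using this

-- if a pair attains the diameter, it is a max/min pair
lemma diamN'_pair_max_min {N : ℕ} (hN : 0 < N) (v : EuclideanSpace ℝ (Fin N)) {i j : Fin N}
    (h : v i - v j = diamN' N v) : (∀ k, v k ≤ v i) ∧ (∀ k, v j ≤ v k) := by
  obtain ⟨a, ha, ha'⟩ := exists_isup hN v
  obtain ⟨b, hb, hb'⟩ := exists_iinf hN v
  unfold diamN' at h
  rw [ha, hb] at h
  have h1 := ha' i
  have h2 := hb' j
  constructor
  · intro k; have := ha' k; linarith
  · intro k; have := hb' k; linarith

set_option maxHeartbeats 1000000 in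
/-- for `α ∈ (0, 1/2)` and identical oscillators (`Ω_i = 0`) whose initial
configuration is confined in a half circle, the phase diameter obeys the algebraic decay
estimate and complete phase synchronization occurs in finite time `T_c`. -/
theorem statement13 (N : ℕ) (hN : 0 < N) (K α : ℝ) (hK : 0 < K)
    (hα : α ∈ Ioo (0 : ℝ) (1 / 2))
    (Θ : ℝ → EuclideanSpace ℝ (Fin N))
    (hsol : IsKuramotoSol N K α (fun _ => 0) Θ)
    (hD0 : 0 < diamN N (Θ 0)) (hD0' : diamN N (Θ 0) < Real.pi) :
    (∀ t ∈ Ici (0 : ℝ),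
      0 ≤ diamN N (Θ 0) ^ (2 * α) -
          2 * α * K * (Real.sin (diamN N (Θ 0)) / diamN N (Θ 0)) * t →
      diamN N (Θ t) ^ (2 * α) ≤
        diamN N (Θ 0) ^ (2 * α) -
          2 * α * K * (Real.sin (diamN N (Θ 0)) / diamN N (Θ 0)) * t) ∧
    (∀ t ∈ Ici (diamN N (Θ 0) ^ (2 * α + 1) / (2 * α * K * Real.sin (diamN N (Θ 0)))),
      ∀ i j : Fin N, Θ t i = Θ t j) := by
  obtain ⟨hα0, hα2⟩ := hα
  have hNe : Nonempty (Fin N) := ⟨⟨0, hN⟩⟩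
  have hpi := Real.pi_pos
  have hdiam : diamN N = diamN' N := rfl
  rw [hdiam]
  set f : ℝ → ℝ := fun t => diamN' N (Θ t) with hfdef
  set D0 : ℝ := diamN' N (Θ 0) with hD0def
  rw [hdiam] at hD0 hD0'
  rw [← hD0def] at hD0 hD0'
  have hsD0 : 0 < Real.sin D0 := Real.sin_pos_of_pos_of_lt_pi hD0 hD0'
  set c : ℝ := 2 * α * K * (Real.sin D0 / D0) with hcdef
  have hc : 0 < c := by
    have : 0 < Real.sin D0 / D0 := div_pos hsD0 hD0
    positivity
  set A : ℝ := D0 ^ (2 * α) with hAdef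
  have hA : 0 < A := Real.rpow_pos_of_pos hD0 _
  -- the pair-difference functions and their derivatives
  set g : Fin N × Fin N → ℝ → ℝ := fun p t => Θ t p.1 - Θ t p.2 with hgdef
  set g' : Fin N × Fin N → ℝ → ℝ := fun p x =>
    (K / N) * ∑ k, hker α (Θ x k - Θ x p.1) - (K / N) * ∑ k, hker α (Θ x k - Θ x p.2)
    with hg'def
  have hg : ∀ x ∈ Ici (0:ℝ), ∀ p : Fin N × Fin N,
      HasDerivWithinAt (g p) (g' p x) (Ici (0:ℝ)) x := by
    intro x hx p
    have h1 := hsol x hx p.1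
    have h2 := hsol x hx p.2
    have h3 := h1.sub h2
    simp only [zero_add, Pi.sub_def] at h3
    exact h3
  have hF2 : ∀ t p, g p t ≤ f t := fun t p => diamN'_le hN (Θ t) p.1 p.2
  have hF3 : ∀ t, ∃ p, f t = g p t := by
    intro t
    obtain ⟨i, j, he, _, _⟩ := diamN'_attain hN (Θ t)
    exact ⟨(i, j), he⟩
  have hF4 : ∀ t, 0 ≤ f t := fun t => diamN'_nonneg hN (Θ t)
  -- continuity of f on [0, ∞)
  have hcont : ContinuousOn f (Ici (0:ℝ)) := by
    have hceq : ∀ t, f t = Finset.univ.sup' Finset.univ_nonempty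
        (fun p : Fin N × Fin N => g p t) := by
      intro t
      apply le_antisymm
      · obtain ⟨p, hp⟩ := hF3 t
        rw [hp]
        exact Finset.le_sup' (fun q : Fin N × Fin N => g q t) (Finset.mem_univ p)
      · exact Finset.sup'_le _ _ fun p _ => hF2 t p
    have hcc : ContinuousOn (fun t => Finset.univ.sup' Finset.univ_nonempty
        (fun p : Fin N × Fin N => g p t)) (Ici (0:ℝ)) := by
      apply ContinuousOn.finset_sup'_apply
      intro p _
      intro x hx
      exact ((hsol x hx p.1).continuousWithinAt).sub ((hsol x hx p.2).continuousWithinAt)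
    exact (hcc.congr fun t _ => hceq t)
  -- Dini derivative surrogate
  have hSne : ∀ x : ℝ, (Finset.univ.filter (fun p : Fin N × Fin N => g p x = f x)).Nonempty := by
    intro x
    obtain ⟨p, hp⟩ := hF3 x
    exact ⟨p, Finset.mem_filter.2 ⟨Finset.mem_univ _, hp.symm⟩⟩
  set f' : ℝ → ℝ := fun x =>
    (Finset.univ.filter (fun p : Fin N × Fin N => g p x = f x)).sup' (hSne x)
      (fun p => g' p x) with hf'def
  have hdini : ∀ x ∈ Ici (0:ℝ), ∀ r, f' x < r → ∃ᶠ z in 𝓝[>] x, slope f x z < r := by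
    intro x hx r hr
    refine dini_max (g := g) (g' := fun p => g' p x) ?_ hF3 hF2 ?_ hr
    · intro p
      exact (hg x hx p).mono (Set.Ici_subset_Ici.2 hx)
    · intro p hp
      exact Finset.le_sup' (f := fun p => g' p x)
        (Finset.mem_filter.2 ⟨Finset.mem_univ _, hp⟩)
  -- key estimate for f' at points where f < π
  have hkey : ∀ x ∈ Ici (0:ℝ), f x < Real.pi →
      f' x ≤ -(K * (Real.sin (f x) / (f x) ^ (2 * α))) := by
    intro x hx hfx
    apply Finset.sup'_le
    intro p hp
    have hp' : g p x = f x := (Finset.mem_filter.1 hp).2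
    have hp'' : Θ x p.1 - Θ x p.2 = diamN' N (Θ x) := hp'
    obtain ⟨hmax, hmin⟩ := diamN'_pair_max_min hN (Θ x) hp''
    have hDlt : Θ x p.1 - Θ x p.2 < Real.pi := by rw [hp'']; exact hfx
    have := pair_deriv_le hK hα0 (fun k => Θ x k) p.1 p.2 hmax hmin hDlt
    rw [hp''] at this
    exact this
  -- generic comparison principle
  have hcomp : ∀ a b : ℝ, 0 ≤ a → a ≤ b → ∀ B B' : ℝ → ℝ,
      ContinuousOn B (Icc a b) →
      (∀ x ∈ Ico a b, HasDerivWithinAt B (B' x) (Ici x) x) →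
      f a ≤ B a → (∀ x ∈ Ico a b, f x = B x → f' x < B' x) → f b ≤ B b := by
    intro a b ha hab B B' hBc hB' hfa hbound
    exact image_le_of_liminf_slope_right_lt_deriv_boundary'
      (hcont.mono fun y hy => le_trans ha hy.1)
      (fun x hx r hr => hdini x (le_trans ha hx.1) r hr)
      hfa hBc hB' hbound (right_mem_Icc.2 hab)
  -- PART 1
  have hpart1 : ∀ t ∈ Ici (0:ℝ), 0 ≤ A - c * t → f t ^ (2 * α) ≤ A - c * t := by
    intro t ht hRHS
    rcases eq_or_lt_of_le (Set.mem_Ici.1 ht) with ht0 | ht0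
    · rw [← ht0]
      simp only [mul_zero, sub_zero]
      exact le_of_eq rfl
    · have hmain : ∀ ε, 0 < ε → ε < c → f t ^ (2 * α) ≤ A - c * t + ε * t := by
        intro ε hε hεc
        set c₁ : ℝ := c - ε with hc₁def
        have hc₁ : 0 < c₁ := by rw [hc₁def]; linarith
        set β : ℝ := 1 / (2 * α) with hβdef
        have hβ : 0 < β := by rw [hβdef]; positivity
        have hβα : β * (2 * α) = 1 := by rw [hβdef]; field_simp
        have hαβ : (2 * α) * β = 1 := by rw [mul_comm]; exact hβα
        have hupos : ∀ y ∈ Icc (0:ℝ) t, 0 < A - c₁ * y := by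
          intro y hy
          have h1 : c₁ * y ≤ c₁ * t := by nlinarith [hy.2]
          have h2 : 0 < A - c₁ * t := by rw [hc₁def]; nlinarith
          linarith
        set B : ℝ → ℝ := fun y => (A - c₁ * y) ^ β with hBdef
        have hBc : ContinuousOn B (Icc 0 t) := by
          intro y hy
          apply ContinuousAt.continuousWithinAt
          have haff : ContinuousAt (fun y : ℝ => A - c₁ * y) y :=
            (continuous_const.sub (continuous_const.mul continuous_id)).continuousAt
          exact haff.rpow_const (Or.inl (hupos y hy).ne')
        have hB' : ∀ x ∈ Ico (0:ℝ) t,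
            HasDerivAt B (β * (A - c₁ * x) ^ (β - 1) * (-c₁)) x := by
          intro x hx
          have h1 : HasDerivAt (fun y : ℝ => A - c₁ * y) (-c₁) x := by
            simpa using ((hasDerivAt_id x).const_mul c₁).const_sub A
          have h2 : HasDerivAt (fun u : ℝ => u ^ β) (β * (A - c₁ * x) ^ (β - 1))
              (A - c₁ * x) :=
            Real.hasDerivAt_rpow_const (Or.inl (hupos x (Ico_subset_Icc_self hx)).ne')
          exact h2.comp x h1
        have hB0 : B 0 = D0 := by
          show (A - c₁ * 0) ^ β = D0
          rw [mul_zero, sub_zero, hAdef, ← Real.rpow_mul hD0.le, hαβ, Real.rpow_one]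
        have hbound : ∀ x ∈ Ico (0:ℝ) t, f x = B x →
            f' x < β * (A - c₁ * x) ^ (β - 1) * (-c₁) := by
          intro x hx hfB
          have hu : 0 < A - c₁ * x := hupos x (Ico_subset_Icc_self hx)
          have hfxpos : 0 < f x := by rw [hfB]; exact Real.rpow_pos_of_pos hu β
          have hfxle : f x ≤ D0 := by
            rw [hfB, ← hB0]
            show (A - c₁ * x) ^ β ≤ (A - c₁ * 0) ^ β
            apply Real.rpow_le_rpow hu.le ?_ hβ.le
            rw [mul_zero, sub_zero]
            nlinarith [hx.1]
          have hfxpi : f x < Real.pi := lt_of_le_of_lt hfxle hD0'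
          have hstep := hkey x hx.1 hfxpi
          refine lt_of_le_of_lt hstep ?_
          have hfx2α : f x ^ (2 * α) = A - c₁ * x := by
            rw [hfB]
            show ((A - c₁ * x) ^ β) ^ (2 * α) = A - c₁ * x
            rw [← Real.rpow_mul hu.le, hβα, Real.rpow_one]
          have hub : (A - c₁ * x) ^ (β - 1) = f x / (A - c₁ * x) := by
            rw [Real.rpow_sub hu, Real.rpow_one, hfB]
          rw [hfx2α, hub]
          have hsin : Real.sin D0 / D0 * f x ≤ Real.sin (f x) := by
            have hm := sin_div_mono hfxpos hfxle hD0'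
            have := mul_le_mul_of_nonneg_right hm hfxpos.le
            calc Real.sin D0 / D0 * f x ≤ Real.sin (f x) / f x * f x := this
              _ = Real.sin (f x) := by field_simp
          have hcβ : c * β = K * (Real.sin D0 / D0) := by
            rw [hcdef, hβdef]; field_simp
          have hred : c₁ * β * f x < K * Real.sin (f x) := by
            have h1 : c₁ * β < c * β :=
              mul_lt_mul_of_pos_right (by rw [hc₁def]; linarith) hβ
            have h2 : c₁ * β * f x < c * β * f x := mul_lt_mul_of_pos_right h1 hfxpos
            have h3 : c * β * f x = K * (Real.sin D0 / D0) * f x := by rw [hcβ]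
            have h4 : K * (Real.sin D0 / D0) * f x ≤ K * Real.sin (f x) := by
              rw [mul_assoc]
              exact mul_le_mul_of_nonneg_left hsin hK.le
            linarith
          have e1 : K * (Real.sin (f x) / (A - c₁ * x)) = K * Real.sin (f x) / (A - c₁ * x) := by
            ring
          have e2 : β * (f x / (A - c₁ * x)) * (-c₁) = -(c₁ * β * f x / (A - c₁ * x)) := by
            ring
          rw [e1, e2, neg_lt_neg_iff]
          exact (div_lt_div_iff_of_pos_right hu).2 hred
        have hcmp := hcomp 0 t le_rfl ht0.le B _ hBc
          (fun x hx => (hB' x hx).hasDerivWithinAt) (by rw [hB0]) hbound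
        have hBt : f t ^ (2 * α) ≤ A - c₁ * t := by
          have h5 : 0 ≤ A - c₁ * t := le_of_lt (hupos t (right_mem_Icc.2 ht0.le))
          calc f t ^ (2 * α) ≤ ((A - c₁ * t) ^ β) ^ (2 * α) :=
                Real.rpow_le_rpow (hF4 t) hcmp (by positivity)
            _ = A - c₁ * t := by rw [← Real.rpow_mul h5, hβα, Real.rpow_one]
        rw [hc₁def] at hBt
        linarith
      by_contra hcon
      push_neg at hcon
      set δ := f t ^ (2 * α) - (A - c * t) with hδdef
      have hδpos : 0 < δ := by rw [hδdef]; linarith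
      set ε0 := min (c / 2) (δ / (2 * t)) with hε0def
      have hε0 : 0 < ε0 := lt_min (by positivity) (by positivity)
      have hεc : ε0 < c := lt_of_le_of_lt (min_le_left _ _) (by linarith)
      have h := hmain ε0 hε0 hεc
      have hle : ε0 * t ≤ δ / 2 := by
        have h1 : ε0 ≤ δ / (2 * t) := min_le_right _ _
        have h2 : ε0 * t ≤ (δ / (2 * t)) * t := by nlinarith
        have h3 : (δ / (2 * t)) * t = δ / 2 := by field_simp
        linarith
      linarith
  refine ⟨fun t ht h => hpart1 t ht h, ?_⟩
  -- PART 2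
  intro t ht i j
  have hTc_eq : D0 ^ (2 * α + 1) / (2 * α * K * Real.sin D0) = A / c := by
    rw [Real.rpow_add hD0, Real.rpow_one, hAdef, hcdef]
    field_simp
  rw [hTc_eq] at ht
  set Tc : ℝ := A / c with hTcdef
  have hTcpos : 0 < Tc := div_pos hA hc
  have hAcTc : A - c * Tc = 0 := by
    rw [hTcdef, mul_div_cancel₀ _ hc.ne']
    ring
  have hfTc0 : f Tc = 0 := by
    have h1 := hpart1 Tc (le_of_lt hTcpos) (le_of_eq hAcTc.symm)
    rw [hAcTc] at h1
    by_contra hne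
    have hpos : 0 < f Tc := lt_of_le_of_ne (hF4 Tc) (Ne.symm hne)
    have := Real.rpow_pos_of_pos hpos (2 * α)
    linarith
  have ht' : Tc ≤ t := ht
  have hft : f t ≤ 0 := by
    rcases eq_or_lt_of_le ht' with he | hlt
    · rw [← he, hfTc0]
    · have h1 : 0 < t - Tc := sub_pos.2 hlt
      have hmain2 : ∀ δ, 0 < δ → δ * (t - Tc) < Real.pi → f t ≤ δ * (t - Tc) := by
        intro δ hδ hδπ
        have hcmp := hcomp Tc t hTcpos.le hlt.le (fun y => δ * (y - Tc)) (fun _ => δ)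
          ((continuous_const.mul (continuous_id.sub continuous_const)).continuousOn)
          (fun x hx => (by simpa using (((hasDerivAt_id x).sub_const Tc).const_mul δ).hasDerivWithinAt (s := Ici x) : HasDerivWithinAt (fun y => δ * (y - Tc)) δ (Ici x) x))
          (by simp [hfTc0])
          ?_
        · simpa using hcmp
        intro x hx hfB
        have hx0 : (0:ℝ) ≤ x := le_trans hTcpos.le hx.1
        have hfxπ : f x < Real.pi := by
          rw [hfB]
          calc δ * (x - Tc) ≤ δ * (t - Tc) := by nlinarith [hx.2.le]
            _ < Real.pi := hδπ
        have hstep := hkey x hx0 hfxπ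
        have hnn : 0 ≤ K * (Real.sin (f x) / f x ^ (2 * α)) := by
          apply mul_nonneg hK.le
          exact div_nonneg (Real.sin_nonneg_of_nonneg_of_le_pi (hF4 x) hfxπ.le)
            (Real.rpow_nonneg (hF4 x) _)
        calc f' x ≤ -(K * (Real.sin (f x) / f x ^ (2 * α))) := hstep
          _ ≤ 0 := neg_nonpos.2 hnn
          _ < δ := hδ
      by_contra hcon2
      push_neg at hcon2
      set δ0 := min (Real.pi / (2 * (t - Tc))) (f t / (2 * (t - Tc))) with hδ0def
      have hδ0pos : 0 < δ0 := lt_min (by positivity) (by positivity)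
      have hδπ : δ0 * (t - Tc) < Real.pi := by
        have hm := min_le_left (Real.pi / (2 * (t - Tc))) (f t / (2 * (t - Tc)))
        calc δ0 * (t - Tc) ≤ (Real.pi / (2 * (t - Tc))) * (t - Tc) := by nlinarith
          _ = Real.pi / 2 := by field_simp
          _ < Real.pi := by linarith
      have hm2 := hmain2 δ0 hδ0pos hδπ
      have hhalf : δ0 * (t - Tc) ≤ f t / 2 := by
        have hm := min_le_right (Real.pi / (2 * (t - Tc))) (f t / (2 * (t - Tc)))
        calc δ0 * (t - Tc) ≤ (f t / (2 * (t - Tc))) * (t - Tc) := by nlinarith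
          _ = f t / 2 := by field_simp
      linarith
  have hft0 : f t = 0 := le_antisymm hft (hF4 t)
  have h1 : Θ t i - Θ t j ≤ f t := hF2 t (i, j)
  have h2 : Θ t j - Θ t i ≤ f t := hF2 t (j, i)
  rw [hft0] at h1 h2
  linarith
end
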